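/- arXiv:1506.04255 — 5 statements merged into one kernel-verified Lean document; each statement's English description precedes it below -/
import Mathlib

section
/- Let S₀, S₁ ⊆ ℝⁿ be compact sets, let ρ₀ and ρ₁ be probability densities on S₀ and S₁ respectively, and let q : S₀ × S₁ → ℝ be continuous and strictly positive. Then there exist nonnegative measurable functions φ₀, φ̂₀ on S₀ and φ₁, φ̂₁ on S₁ satisfying the Schrödinger system: φ₀(x) = ∫_{S₁} q(x,y) φ₁(y) dy for all x ∈ S₀; φ̂₁(x) = ∫_{S₀} q(y,x) φ̂₀(y) dy for all x ∈ S₁; ρ₀(x) = φ₀(x) φ̂₀(x) for a.e. x ∈ S₀; and ρ₁(x) = φ₁(x) φ̂₁(x) for a.e. x ∈ S₁. -/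
/-!
Extend `q` off `S₀ × S₁` to a measurable kernel `K` with `0 < m ≤ K ≤ M` everywhere. The system
is then solved by a fixed point `w = φ₀` of Fortet's iteration `w ↦ K (ρ₁ / Kᵀ (ρ₀ / w))`,
normalized to unit mass. In Hilbert's projective metric the divisions and the normalization are
isometries, while each integration against `K` contracts by the factor `1 - m / M` (Birkhoff), so
the iterates converge uniformly to a fixed point. Pairing the fixed-point equation with `ρ₀ / w`
and applying Fubini shows that the normalizing constant is `1`, because `ρ₀` and `ρ₁` have the
same mass.
-/

open MeasureTheory Set Filter Topology

noncomputable section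

variable {X Y : Type*}

/-- `f / g` takes values in a window `[a, r a]` with `a > 0`: the Hilbert projective distance
between `f` and `g` is at most `log r`. -/
def RatioLE (r : ℝ) (f g : X → ℝ) : Prop :=
  ∃ a, 0 < a ∧ ∀ x, a * g x ≤ f x ∧ f x ≤ r * a * g x

theorem integral_mem_Icc_of_forall_mem [MeasurableSpace X] {μ : Measure X} {f g : X → ℝ}
    {a b : ℝ} (hf : Integrable f μ) (hg : Integrable g μ)
    (hfg : ∀ x, a * g x ≤ f x ∧ f x ≤ b * g x) :
    ∫ x, f x ∂μ ∈ Icc (a * ∫ x, g x ∂μ) (b * ∫ x, g x ∂μ) := by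
  rw [← integral_const_mul, ← integral_const_mul]
  exact ⟨integral_mono (hg.const_mul a) hf fun x => (hfg x).1,
    integral_mono hf (hg.const_mul b) fun x => (hfg x).2⟩

namespace RatioLE

variable {r : ℝ} {f g : X → ℝ}

theorem div_swap (h : RatioLE r f g) {ρ : X → ℝ} (hρ : ∀ x, 0 ≤ ρ x) (hg : ∀ x, 0 < g x) :
    RatioLE r (ρ / g) (ρ / f) := by
  obtain ⟨a, ha, hfg⟩ := h
  refine ⟨a, ha, fun x => ?_⟩
  have hf : 0 < f x := (mul_pos ha (hg x)).trans_le (hfg x).1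
  simp only [Pi.div_apply]
  constructor
  · rw [← mul_div_assoc, div_le_div_iff₀ hf (hg x)]
    nlinarith [mul_le_mul_of_nonneg_left (hfg x).1 (hρ x)]
  · rw [← mul_div_assoc, div_le_div_iff₀ (hg x) hf]
    nlinarith [mul_le_mul_of_nonneg_left (hfg x).2 (hρ x)]

theorem div_const (h : RatioLE r f g) {c c' : ℝ} (hc : 0 < c) (hc' : 0 < c') :
    RatioLE r (fun x => f x / c) (fun x => g x / c') := by
  obtain ⟨a, ha, hfg⟩ := h
  refine ⟨a * c' / c, by positivity, fun x => ⟨?_, ?_⟩⟩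
  · calc a * c' / c * (g x / c') = a * g x / c := by field_simp
      _ ≤ f x / c := by gcongr; exact (hfg x).1
  · calc f x / c ≤ r * a * g x / c := by gcongr; exact (hfg x).2
      _ = r * (a * c' / c) * (g x / c') := by field_simp

theorem of_mem_Icc {c C : ℝ} (hc : 0 < c) (hcC : c ≤ C) (hf : ∀ x, f x ∈ Icc c C)
    (hg : ∀ x, g x ∈ Icc c C) : RatioLE ((C / c) ^ 2) f g := by
  have hC : 0 < C := hc.trans_le hcC
  refine ⟨c / C, by positivity, fun x => ⟨?_, ?_⟩⟩
  · calc c / C * g x ≤ c / C * C := by gcongr; exact (hg x).2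
      _ = c := by field_simp
      _ ≤ f x := (hf x).1
  · calc f x ≤ C := (hf x).2
      _ = (C / c) ^ 2 * (c / C) * c := by field_simp
      _ ≤ (C / c) ^ 2 * (c / C) * g x := by gcongr; exact (hg x).1

theorem of_abs_sub_le {c ε : ℝ} (hε : 0 ≤ ε) (hεc : ε < c) (hg : ∀ x, c ≤ g x)
    (hfg : ∀ x, |f x - g x| ≤ ε) : RatioLE (1 + 2 * ε / (c - ε)) f g := by
  have hc : 0 < c := hε.trans_lt hεc
  have hcε : 0 < c - ε := sub_pos.2 hεc
  refine ⟨(c - ε) / c, div_pos hcε hc, fun x => ?_⟩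
  have hεg : ε ≤ ε / c * g x := by
    rw [div_mul_eq_mul_div, le_div_iff₀ hc]; exact mul_le_mul_of_nonneg_left (hg x) hε
  obtain ⟨h₁, h₂⟩ := abs_le.1 (hfg x)
  constructor
  · calc (c - ε) / c * g x = g x - ε / c * g x := by field_simp
      _ ≤ f x := by linarith
  · calc f x ≤ g x + ε / c * g x := by linarith
      _ = (1 + 2 * ε / (c - ε)) * ((c - ε) / c) * g x := by field_simp; ring

theorem abs_sub_le [MeasurableSpace X] {μ : Measure X} (h : RatioLE r f g) (hf : Integrable f μ)
    (hg : Integrable g μ) (hf1 : ∫ x, f x ∂μ = 1) (hg1 : ∫ x, g x ∂μ = 1) {C : ℝ}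
    (hg0 : ∀ x, 0 ≤ g x) (hgC : ∀ x, g x ≤ C) (x : X) : |f x - g x| ≤ (r - 1) * C := by
  obtain ⟨a, ha, hfg⟩ := h
  obtain ⟨ha1, hra⟩ := integral_mem_Icc_of_forall_mem hf hg hfg
  simp only [hf1, hg1, mul_one] at ha1 hra
  have hr : 1 ≤ r := by nlinarith
  have hC : 0 ≤ C := (hg0 x).trans (hgC x)
  obtain ⟨hlo, hhi⟩ := hfg x
  rw [abs_le]
  constructor
  · have : 1 - a ≤ r - 1 := by nlinarith
    nlinarith [mul_le_mul_of_nonneg_left (hgC x) (sub_nonneg.2 ha1),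
      mul_le_mul_of_nonneg_right this hC]
  · have : r * a - 1 ≤ r - 1 := by nlinarith
    nlinarith [mul_le_mul_of_nonneg_left (hgC x) (sub_nonneg.2 hra),
      mul_le_mul_of_nonneg_right this hC]

end RatioLE

section FixedPoint

variable [MeasurableSpace X]

def measurableIcc (c C : ℝ) : Set (X → ℝ) := {w | Measurable w ∧ ∀ x, w x ∈ Icc c C}

theorem integrable_of_mem_measurableIcc {μ : Measure X} [IsFiniteMeasure μ] {c C : ℝ}
    {w : X → ℝ} (hw : w ∈ measurableIcc c C) (hc : 0 ≤ c) : Integrable w μ :=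
  .of_bound hw.1.aestronglyMeasurable C <| ae_of_all _ fun x => by
    rw [Real.norm_eq_abs, abs_le]
    constructor <;> linarith [(hw.2 x).1, (hw.2 x).2]

variable {μ : Measure X} [IsFiniteMeasure μ] {F : (X → ℝ) → X → ℝ} {c C κ : ℝ}

/-- Uniform closeness to a function `≥ c` bounds the projective distance, which `F` does not
increase; `RatioLE.abs_sub_le` turns the image bound back into uniform closeness. -/
theorem tendsto_apply_of_abs_sub_le (hc : 0 < c)
    (hF : MapsTo F (measurableIcc c C) (measurableIcc c C))
    (hF1 : ∀ w ∈ measurableIcc c C, ∫ x, F w x ∂μ = 1)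
    (hFr : ∀ w ∈ measurableIcc c C, ∀ w' ∈ measurableIcc c C, ∀ r,
      RatioLE r w w' → RatioLE (1 + κ * (r - 1)) (F w) (F w'))
    {u : ℕ → X → ℝ} {w : X → ℝ} (hu : ∀ n, u n ∈ measurableIcc c C)
    (hw : w ∈ measurableIcc c C) {ε : ℕ → ℝ} (hε : Tendsto ε atTop (𝓝 0))
    (huw : ∀ n x, |u n x - w x| ≤ ε n) (x : X) :
    Tendsto (fun n => F (u n) x) atTop (𝓝 (F w x)) := by
  have hbound : ∀ᶠ n in atTop, dist (F (u n) x) (F w x) ≤ κ * (2 * ε n / (c - ε n)) * C := by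
    filter_upwards [hε.eventually (gt_mem_nhds hc)] with n hn
    have hr := hFr w hw (u n) (hu n) _ <|
      RatioLE.of_abs_sub_le ((abs_nonneg _).trans (huw n x)) hn (fun y => ((hu n).2 y).1)
        fun y => by rw [abs_sub_comm]; exact huw n y
    rw [Real.dist_eq, abs_sub_comm]
    simpa using hr.abs_sub_le (integrable_of_mem_measurableIcc (hF hw) hc.le)
      (integrable_of_mem_measurableIcc (hF (hu n)) hc.le) (hF1 w hw) (hF1 _ (hu n))
      (fun y => hc.le.trans ((hF (hu n)).2 y).1) (fun y => ((hF (hu n)).2 y).2) x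
  have hlim : Tendsto (fun n => κ * (2 * ε n / (c - ε n)) * C) atTop (𝓝 0) := by
    simpa using (((hε.const_mul 2).div (tendsto_const_nhds.sub hε)
      (by simpa using hc.ne')).const_mul κ).mul_const C
  exact tendsto_iff_dist_tendsto_zero.2
    (squeeze_zero' (Eventually.of_forall fun n => dist_nonneg) hbound hlim)

theorem exists_abs_sub_le_of_ratioLE (hc : 0 ≤ c) {u : ℕ → X → ℝ}
    (hu : ∀ n, u n ∈ measurableIcc c C) (hu1 : ∀ n, ∫ x, u n x ∂μ = 1) {D : ℝ} (hκ : κ < 1)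
    (hr : ∀ n, RatioLE (1 + κ ^ n * D) (u (n + 1)) (u n)) :
    ∃ w ∈ measurableIcc c C, ∀ n x, |u n x - w x| ≤ D * C * κ ^ n / (1 - κ) := by
  have hdist x n : dist (u n x) (u (n + 1) x) ≤ D * C * κ ^ n := by
    rw [Real.dist_eq, abs_sub_comm]
    calc _ ≤ (1 + κ ^ n * D - 1) * C :=
          (hr n).abs_sub_le (integrable_of_mem_measurableIcc (hu (n + 1)) hc)
            (integrable_of_mem_measurableIcc (hu n) hc) (hu1 _) (hu1 _)
            (fun y => hc.trans ((hu n).2 y).1) (fun y => ((hu n).2 y).2) x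
      _ = D * C * κ ^ n := by ring
  choose w hw using fun x =>
    cauchySeq_tendsto_of_complete (cauchySeq_of_le_geometric κ (D * C) hκ (hdist x))
  refine ⟨w, ⟨measurable_of_tendsto_metrizable (fun n => (hu n).1) (tendsto_pi_nhds.2 hw),
    fun x => isClosed_Icc.mem_of_tendsto (hw x) (Eventually.of_forall fun n => (hu n).2 x)⟩,
    fun n x => ?_⟩
  rw [← Real.dist_eq]
  exact dist_le_of_le_geometric_of_tendsto κ (D * C) hκ (hdist x) (hw x) n

theorem exists_fixedPoint_of_ratioLE (hc : 0 < c) (hcC : c ≤ C) (hκ₀ : 0 ≤ κ) (hκ₁ : κ < 1)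
    (hF : MapsTo F (measurableIcc c C) (measurableIcc c C))
    (hF1 : ∀ w ∈ measurableIcc c C, ∫ x, F w x ∂μ = 1)
    (hFr : ∀ w ∈ measurableIcc c C, ∀ w' ∈ measurableIcc c C, ∀ r,
      RatioLE r w w' → RatioLE (1 + κ * (r - 1)) (F w) (F w')) :
    ∃ w ∈ measurableIcc c C, F w = w := by
  have hconst : (fun _ => c) ∈ measurableIcc (X := X) c C :=
    ⟨measurable_const, fun _ => ⟨le_rfl, hcC⟩⟩
  set u : ℕ → X → ℝ := fun n => F^[n + 1] fun _ => c
  have hu_succ n : u (n + 1) = F (u n) := Function.iterate_succ_apply' F (n + 1) _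
  have hu n : u n ∈ measurableIcc c C := by
    induction n with
    | zero => exact hF hconst
    | succ n ih => rw [hu_succ]; exact hF ih
  have hu1 n : ∫ x, u n x ∂μ = 1 := by
    cases n with
    | zero => exact hF1 _ hconst
    | succ n => rw [hu_succ]; exact hF1 _ (hu n)
  have hratio n : RatioLE (1 + κ ^ n * ((C / c) ^ 2 - 1)) (u (n + 1)) (u n) := by
    induction n with
    | zero => simpa using RatioLE.of_mem_Icc hc hcC (hu 1).2 (hu 0).2
    | succ n ih =>
      convert hFr _ (hu (n + 1)) _ (hu n) _ ih using 1
      · ring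
      · exact hu_succ _
      · exact hu_succ _
  obtain ⟨w, hw, huw⟩ := exists_abs_sub_le_of_ratioLE hc.le hu hu1 hκ₁ hratio
  have hε : Tendsto (fun n => ((C / c) ^ 2 - 1) * C * κ ^ n / (1 - κ)) atTop (𝓝 0) := by
    simpa using ((tendsto_pow_atTop_nhds_zero_of_lt_one hκ₀ hκ₁).const_mul
      (((C / c) ^ 2 - 1) * C)).div_const (1 - κ)
  have hlim x : Tendsto (fun n => u n x) atTop (𝓝 (w x)) :=
    tendsto_iff_dist_tendsto_zero.2 <| squeeze_zero (fun _ => dist_nonneg)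
      (fun n => (Real.dist_eq _ _).trans_le (huw n x)) hε
  refine ⟨w, hw, funext fun x => tendsto_nhds_unique ?_ ((hlim x).comp (tendsto_add_atTop_nat 1))⟩
  exact (tendsto_apply_of_abs_sub_le hc hF hF1 hFr hu hw hε huw x).congr fun n =>
    congrFun (hu_succ n).symm x

end FixedPoint

section Kernel

variable [MeasurableSpace Y]

def kernelOp (ν : Measure Y) (k : X → Y → ℝ) (f : Y → ℝ) : X → ℝ :=
  fun x => ∫ y, k x y * f y ∂ν

theorem kernelOp_const_mul {ν : Measure Y} {k : X → Y → ℝ} {f : Y → ℝ} (a : ℝ) (x : X) :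
    kernelOp ν k (fun y => a * f y) x = a * kernelOp ν k f x := by
  simp only [kernelOp, mul_left_comm _ a, integral_const_mul]

variable [MeasurableSpace X]

structure PosIntegrable (μ : Measure X) (f : X → ℝ) : Prop where
  measurable : Measurable f
  nonneg : ∀ x, 0 ≤ f x
  integrable : Integrable f μ
  integral_pos : 0 < ∫ x, f x ∂μ

theorem PosIntegrable.ne_zero {μ : Measure X} {f : X → ℝ} (hf : PosIntegrable μ f) : μ ≠ 0 := by
  rintro rfl
  simpa using hf.integral_pos

theorem PosIntegrable.div {μ : Measure X} {ρ w : X → ℝ} (hρ : PosIntegrable μ ρ)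
    (hw : Measurable w) {c : ℝ} (hc : 0 < c) (hwc : ∀ x, c ≤ w x) :
    PosIntegrable μ (ρ / w) := by
  have hw0 x : 0 < w x := hc.trans_le (hwc x)
  have hnn x : 0 ≤ (ρ / w) x := div_nonneg (hρ.nonneg x) (hw0 x).le
  have hint : Integrable (ρ / w) μ := by
    refine (hρ.integrable.div_const c).mono' (hρ.measurable.div hw).aestronglyMeasurable
      (ae_of_all _ fun x => ?_)
    rw [Real.norm_eq_abs, abs_of_nonneg (hnn x)]
    exact div_le_div_of_nonneg_left (hρ.nonneg x) hc (hwc x)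
  refine ⟨hρ.measurable.div hw, hnn, hint, ?_⟩
  have hsupp : Function.support (ρ / w) = Function.support ρ := by
    ext x
    simp [(hw0 x).ne']
  rw [integral_pos_iff_support_of_nonneg hnn hint, hsupp,
    ← integral_pos_iff_support_of_nonneg hρ.nonneg hρ.integrable]
  exact hρ.integral_pos

theorem posIntegrable_max_zero {μ : Measure X} {ρ : X → ℝ} (hρ : Measurable ρ)
    (hpos : 0 < ∫ x, max (ρ x) 0 ∂μ) : PosIntegrable μ fun x => max (ρ x) 0 :=
  ⟨hρ.max measurable_const, fun _ => le_max_right _ _, .of_integral_ne_zero hpos.ne', hpos⟩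

structure KernelBounds (k : X → Y → ℝ) (m M : ℝ) : Prop where
  measurable : Measurable (Function.uncurry k)
  pos : 0 < m
  le : m ≤ M
  mem_Icc : ∀ x y, k x y ∈ Icc m M

namespace KernelBounds

variable {k : X → Y → ℝ} {m M : ℝ} {ν : Measure Y} {f g : Y → ℝ}

theorem symm (hk : KernelBounds k m M) : KernelBounds (fun y x => k x y) m M :=
  ⟨hk.measurable.comp measurable_swap, hk.pos, hk.le, fun y x => hk.mem_Icc x y⟩

theorem norm_le (hk : KernelBounds k m M) (x : X) (y : Y) : ‖k x y‖ ≤ M :=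
  abs_le.2 ⟨by linarith [hk.pos, (hk.mem_Icc x y).1, hk.le], (hk.mem_Icc x y).2⟩

theorem integrable_mul (hk : KernelBounds k m M) (hf : Integrable f ν) (x : X) :
    Integrable (fun y => k x y * f y) ν :=
  hf.bdd_mul (hk.measurable.comp measurable_prodMk_left).aestronglyMeasurable <|
    ae_of_all _ (hk.norm_le x)

theorem measurable_kernelOp [SFinite ν] (hk : KernelBounds k m M) (hf : Measurable f) :
    Measurable (kernelOp ν k f) :=
  (hk.measurable.mul (hf.comp measurable_snd)).stronglyMeasurable.integral_prod_right.measurable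

theorem kernelOp_mem_Icc (hk : KernelBounds k m M) (hf : Integrable f ν) (hf0 : ∀ y, 0 ≤ f y)
    (x : X) : kernelOp ν k f x ∈ Icc (m * ∫ y, f y ∂ν) (M * ∫ y, f y ∂ν) := by
  rw [← integral_const_mul, ← integral_const_mul]
  exact ⟨integral_mono (hf.const_mul m) (hk.integrable_mul hf x) fun y =>
      mul_le_mul_of_nonneg_right (hk.mem_Icc x y).1 (hf0 y),
    integral_mono (hk.integrable_mul hf x) (hf.const_mul M) fun y =>
      mul_le_mul_of_nonneg_right (hk.mem_Icc x y).2 (hf0 y)⟩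

theorem mul_sub_le_kernelOp_sub (hk : KernelBounds k m M) (hf : Integrable f ν)
    (hg : Integrable g ν) (hgf : ∀ y, g y ≤ f y) (x : X) :
    m * (∫ y, f y ∂ν - ∫ y, g y ∂ν) ≤ kernelOp ν k f x - kernelOp ν k g x := by
  have h := (hk.kernelOp_mem_Icc (hf.sub hg) (fun y => sub_nonneg.2 (hgf y)) x).1
  simp only [kernelOp, Pi.sub_apply, mul_sub] at h
  rwa [integral_sub hf hg, integral_sub (hk.integrable_mul hf x) (hk.integrable_mul hg x)] at h

theorem posIntegrable_kernelOp {μ : Measure X} [IsFiniteMeasure μ] [SFinite ν] (hμ : μ ≠ 0)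
    (hk : KernelBounds k m M) (hf : PosIntegrable ν f) : PosIntegrable μ (kernelOp ν k f) := by
  have hbd := hk.kernelOp_mem_Icc hf.integrable hf.nonneg
  have hlow : 0 < m * ∫ y, f y ∂ν := mul_pos hk.pos hf.integral_pos
  have hmeas := hk.measurable_kernelOp (ν := ν) hf.measurable
  have hint : Integrable (kernelOp ν k f) μ :=
    .of_bound hmeas.aestronglyMeasurable (M * ∫ y, f y ∂ν) <| ae_of_all _ fun x => by
      rw [Real.norm_eq_abs, abs_of_pos (hlow.trans_le (hbd x).1)]
      exact (hbd x).2
  refine ⟨hmeas, fun x => (hlow.trans_le (hbd x).1).le, hint, ?_⟩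
  have := NeZero.mk hμ
  calc 0 < μ.real univ * (m * ∫ y, f y ∂ν) := mul_pos measureReal_univ_pos hlow
    _ = ∫ _, m * ∫ y, f y ∂ν ∂μ := by rw [integral_const, smul_eq_mul]
    _ ≤ ∫ x, kernelOp ν k f x ∂μ := integral_mono (integrable_const _) hint fun x => (hbd x).1

/-- Birkhoff's estimate: since `k ≥ m`, the excess of `f` over `a g` (and of `b g` over `f`) adds a
multiple of its mass to `K f - a K g` (resp. `b K g - K f`), while `K g ≤ M ∫ g`. -/
theorem kernelOp_sandwich (hk : KernelBounds k m M) (hf : Integrable f ν) (hg : PosIntegrable ν g)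
    {a b : ℝ} (hfg : ∀ y, a * g y ≤ f y ∧ f y ≤ b * g y) (x : X) :
    (a + m * (∫ y, f y ∂ν - a * ∫ y, g y ∂ν) / (M * ∫ y, g y ∂ν)) * kernelOp ν k g x
        ≤ kernelOp ν k f x ∧
      kernelOp ν k f x
        ≤ (b - m * (b * ∫ y, g y ∂ν - ∫ y, f y ∂ν) / (M * ∫ y, g y ∂ν)) * kernelOp ν k g x := by
  obtain ⟨hIlo, hIhi⟩ := integral_mem_Icc_of_forall_mem hf hg.integrable hfg
  have hMN : 0 < M * ∫ y, g y ∂ν := mul_pos (hk.pos.trans_le hk.le) hg.integral_pos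
  have hKg := (hk.kernelOp_mem_Icc hg.integrable hg.nonneg x).2
  have hlo := hk.mul_sub_le_kernelOp_sub hf (hg.integrable.const_mul a) (fun y => (hfg y).1) x
  have hhi := hk.mul_sub_le_kernelOp_sub (hg.integrable.const_mul b) hf (fun y => (hfg y).2) x
  simp only [integral_const_mul, kernelOp_const_mul] at hlo hhi
  have hδ : m * (∫ y, f y ∂ν - a * ∫ y, g y ∂ν) / (M * ∫ y, g y ∂ν) * kernelOp ν k g x
      ≤ m * (∫ y, f y ∂ν - a * ∫ y, g y ∂ν) :=
    (mul_le_mul_of_nonneg_left hKg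
      (div_nonneg (mul_nonneg hk.pos.le (sub_nonneg.2 hIlo)) hMN.le)).trans_eq
      (div_mul_cancel₀ _ hMN.ne')
  have hη : m * (b * ∫ y, g y ∂ν - ∫ y, f y ∂ν) / (M * ∫ y, g y ∂ν) * kernelOp ν k g x
      ≤ m * (b * ∫ y, g y ∂ν - ∫ y, f y ∂ν) :=
    (mul_le_mul_of_nonneg_left hKg
      (div_nonneg (mul_nonneg hk.pos.le (sub_nonneg.2 hIhi)) hMN.le)).trans_eq
      (div_mul_cancel₀ _ hMN.ne')
  constructor
  · rw [add_mul]; linarith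
  · rw [sub_mul]; linarith

theorem ratioLE_kernelOp (hk : KernelBounds k m M) {r : ℝ} (hf : Integrable f ν)
    (hg : PosIntegrable ν g) (h : RatioLE r f g) :
    RatioLE (1 + (1 - m / M) * (r - 1)) (kernelOp ν k f) (kernelOp ν k g) := by
  obtain ⟨a, ha, hfg⟩ := h
  obtain ⟨hIlo, hIhi⟩ := integral_mem_Icc_of_forall_mem hf hg.integrable hfg
  have hN := hg.integral_pos
  have hM : 0 < M := hk.pos.trans_le hk.le
  have hr : 1 ≤ r := by nlinarith [mul_pos ha hN]
  set δ := m * (∫ y, f y ∂ν - a * ∫ y, g y ∂ν) / (M * ∫ y, g y ∂ν)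
  set η := m * (r * a * ∫ y, g y ∂ν - ∫ y, f y ∂ν) / (M * ∫ y, g y ∂ν)
  have hδ : 0 ≤ δ := div_nonneg (mul_nonneg hk.pos.le (sub_nonneg.2 hIlo)) (by positivity)
  have hδη : δ + η = m / M * a * (r - 1) := by
    simp only [δ, η]
    field_simp
    ring
  have hgap : r * a - η ≤ (1 + (1 - m / M) * (r - 1)) * (a + δ) := by
    clear_value δ η
    have : 0 ≤ (1 - m / M) * (r - 1) * δ :=
      mul_nonneg (mul_nonneg (sub_nonneg.2 (div_le_one_of_le₀ hk.le hM.le)) (sub_nonneg.2 hr)) hδ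
    linear_combination this - hδη
  refine ⟨a + δ, by positivity, fun x => ?_⟩
  obtain ⟨h₁, h₂⟩ := hk.kernelOp_sandwich hf hg hfg x
  exact ⟨h₁, h₂.trans (mul_le_mul_of_nonneg_right hgap
    ((mul_pos hk.pos hN).le.trans (hk.kernelOp_mem_Icc hg.integrable hg.nonneg x).1))⟩

theorem integral_mul_kernelOp {μ : Measure X} [SFinite μ] [SFinite ν]
    (hk : KernelBounds k m M) {f : X → ℝ} (hf : Integrable f μ) (hg : Integrable g ν) :
    ∫ x, f x * kernelOp ν k g x ∂μ = ∫ y, kernelOp μ (fun y x => k x y) f y * g y ∂ν := by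
  have hint : Integrable (Function.uncurry fun x y => f x * (k x y * g y)) (μ.prod ν) :=
    ((hf.mul_prod hg).bdd_mul hk.measurable.aestronglyMeasurable
      (ae_of_all _ fun p => hk.norm_le p.1 p.2)).congr <| ae_of_all _ fun p => by
        simp only [Function.uncurry]
        ring
  calc ∫ x, f x * kernelOp ν k g x ∂μ = ∫ x, ∫ y, f x * (k x y * g y) ∂ν ∂μ := by
        simp only [kernelOp, integral_const_mul]
    _ = ∫ y, ∫ x, f x * (k x y * g y) ∂μ ∂ν := integral_integral_swap hint
    _ = ∫ y, kernelOp μ (fun y x => k x y) f y * g y ∂ν := by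
        simp only [kernelOp, ← integral_mul_const]
        refine integral_congr_ae (ae_of_all _ fun y => integral_congr_ae (ae_of_all _ fun x => ?_))
        ring

end KernelBounds

theorem div_integral_mem_Icc {μ : Measure X} [IsFiniteMeasure μ] (hμ : μ ≠ 0) {h : X → ℝ}
    (hh : Integrable h μ) {m M s : ℝ} (hm : 0 < m) (hs : 0 < s)
    (hb : ∀ x, h x ∈ Icc (m * s) (M * s)) (x : X) :
    h x / ∫ x, h x ∂μ ∈ Icc (m / (M * μ.real univ)) (M / (m * μ.real univ)) := by
  have := NeZero.mk hμ
  have hV : 0 < μ.real univ := measureReal_univ_pos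
  have hM : 0 < M := hm.trans_le (le_of_mul_le_mul_right ((hb x).1.trans (hb x).2) hs)
  have hZ : ∫ x, h x ∂μ ∈ Icc (μ.real univ * (m * s)) (μ.real univ * (M * s)) := by
    have hlo := integral_mono (integrable_const (m * s)) hh fun x => (hb x).1
    have hhi := integral_mono hh (integrable_const (M * s)) fun x => (hb x).2
    simp only [integral_const, smul_eq_mul] at hlo hhi
    exact ⟨hlo, hhi⟩
  constructor
  · calc m / (M * μ.real univ) = m * s / (μ.real univ * (M * s)) := by field_simp
      _ ≤ h x / ∫ x, h x ∂μ :=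
        div_le_div₀ ((mul_pos hm hs).le.trans (hb x).1) (hb x).1
          ((mul_pos hV (mul_pos hm hs)).trans_le hZ.1) hZ.2
  · calc h x / ∫ x, h x ∂μ ≤ M * s / (μ.real univ * (m * s)) :=
          div_le_div₀ (mul_pos hM hs).le (hb x).2 (mul_pos hV (mul_pos hm hs)) hZ.1
      _ = M / (m * μ.real univ) := by field_simp

end Kernel

section Fortet

variable [MeasurableSpace X] [MeasurableSpace Y] {μ : Measure X} {ν : Measure Y}
  {ρ₀ : X → ℝ} {ρ₁ : Y → ℝ} {K : X → Y → ℝ} {m M : ℝ} {w w' : X → ℝ} {c c' : ℝ}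

/-- In the notation of the Schrödinger system, with `w = φ₀`: `ρ₀ / w` is `φ̂₀`, `fortetDual` is
`φ̂₁`, `ρ₁ / fortetDual` is `φ₁`, and `fortetPotential` is the updated `φ₀`, which `fortetMap`
normalizes to unit mass. -/
def fortetDual (μ : Measure X) (ρ₀ : X → ℝ) (K : X → Y → ℝ) (w : X → ℝ) : Y → ℝ :=
  kernelOp μ (fun y x => K x y) (ρ₀ / w)

def fortetPotential (μ : Measure X) (ν : Measure Y) (ρ₀ : X → ℝ) (ρ₁ : Y → ℝ)
    (K : X → Y → ℝ) (w : X → ℝ) : X → ℝ :=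
  kernelOp ν K (ρ₁ / fortetDual μ ρ₀ K w)

def fortetMap (μ : Measure X) (ν : Measure Y) (ρ₀ : X → ℝ) (ρ₁ : Y → ℝ) (K : X → Y → ℝ)
    (w : X → ℝ) : X → ℝ :=
  fun x => fortetPotential μ ν ρ₀ ρ₁ K w x / ∫ z, fortetPotential μ ν ρ₀ ρ₁ K w z ∂μ

theorem le_fortetDual (hK : KernelBounds K m M) (hρ₀ : PosIntegrable μ ρ₀) (hw : Measurable w)
    (hc : 0 < c) (hwc : ∀ x, c ≤ w x) (y : Y) :
    m * ∫ x, (ρ₀ / w) x ∂μ ≤ fortetDual μ ρ₀ K w y :=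
  (hK.symm.kernelOp_mem_Icc (hρ₀.div hw hc hwc).integrable (hρ₀.div hw hc hwc).nonneg y).1

theorem fortetDual_pos (hK : KernelBounds K m M) (hρ₀ : PosIntegrable μ ρ₀) (hw : Measurable w)
    (hc : 0 < c) (hwc : ∀ x, c ≤ w x) (y : Y) : 0 < fortetDual μ ρ₀ K w y :=
  (mul_pos hK.pos (hρ₀.div hw hc hwc).integral_pos).trans_le (le_fortetDual hK hρ₀ hw hc hwc y)

variable [IsFiniteMeasure μ]

theorem posIntegrable_div_fortetDual (hK : KernelBounds K m M) (hρ₀ : PosIntegrable μ ρ₀)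
    (hρ₁ : PosIntegrable ν ρ₁) (hw : Measurable w) (hc : 0 < c) (hwc : ∀ x, c ≤ w x) :
    PosIntegrable ν (ρ₁ / fortetDual μ ρ₀ K w) :=
  hρ₁.div (hK.symm.measurable_kernelOp (hρ₀.div hw hc hwc).measurable)
    (mul_pos hK.pos (hρ₀.div hw hc hwc).integral_pos) (le_fortetDual hK hρ₀ hw hc hwc)

variable [IsFiniteMeasure ν]

theorem posIntegrable_fortetPotential (hK : KernelBounds K m M) (hρ₀ : PosIntegrable μ ρ₀)
    (hρ₁ : PosIntegrable ν ρ₁) (hw : Measurable w) (hc : 0 < c) (hwc : ∀ x, c ≤ w x) :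
    PosIntegrable μ (fortetPotential μ ν ρ₀ ρ₁ K w) :=
  hK.posIntegrable_kernelOp hρ₀.ne_zero (posIntegrable_div_fortetDual hK hρ₀ hρ₁ hw hc hwc)

theorem fortetMap_mem (hK : KernelBounds K m M) (hρ₀ : PosIntegrable μ ρ₀)
    (hρ₁ : PosIntegrable ν ρ₁) (hw : Measurable w) (hc : 0 < c) (hwc : ∀ x, c ≤ w x) :
    fortetMap μ ν ρ₀ ρ₁ K w ∈ measurableIcc (m / (M * μ.real univ)) (M / (m * μ.real univ)) := by
  have hu := posIntegrable_div_fortetDual hK hρ₀ hρ₁ hw hc hwc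
  have hP := posIntegrable_fortetPotential hK hρ₀ hρ₁ hw hc hwc
  exact ⟨hP.measurable.div_const _, div_integral_mem_Icc hρ₀.ne_zero hP.integrable hK.pos
    hu.integral_pos (hK.kernelOp_mem_Icc hu.integrable hu.nonneg)⟩

theorem integral_fortetMap (hK : KernelBounds K m M) (hρ₀ : PosIntegrable μ ρ₀)
    (hρ₁ : PosIntegrable ν ρ₁) (hw : Measurable w) (hc : 0 < c) (hwc : ∀ x, c ≤ w x) :
    ∫ x, fortetMap μ ν ρ₀ ρ₁ K w x ∂μ = 1 := by
  simp only [fortetMap, integral_div]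
  exact div_self (posIntegrable_fortetPotential hK hρ₀ hρ₁ hw hc hwc).integral_pos.ne'

/-- Each of the two kernel integrations shrinks the projective distance by the factor `1 - m / M`;
the divisions and the normalization preserve it. -/
theorem ratioLE_fortetMap (hK : KernelBounds K m M) (hρ₀ : PosIntegrable μ ρ₀)
    (hρ₁ : PosIntegrable ν ρ₁) (hw : Measurable w) (hc : 0 < c) (hwc : ∀ x, c ≤ w x)
    (hw' : Measurable w') (hc' : 0 < c') (hwc' : ∀ x, c' ≤ w' x) {r : ℝ} (h : RatioLE r w w') :
    RatioLE (1 + (1 - m / M) ^ 2 * (r - 1)) (fortetMap μ ν ρ₀ ρ₁ K w)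
      (fortetMap μ ν ρ₀ ρ₁ K w') := by
  have hdual := hK.symm.ratioLE_kernelOp (hρ₀.div hw' hc' hwc').integrable (hρ₀.div hw hc hwc)
    (h.div_swap hρ₀.nonneg fun x => hc'.trans_le (hwc' x))
  have hpot := hK.ratioLE_kernelOp (posIntegrable_div_fortetDual hK hρ₀ hρ₁ hw hc hwc).integrable
    (posIntegrable_div_fortetDual hK hρ₀ hρ₁ hw' hc' hwc')
    (hdual.div_swap hρ₁.nonneg (fortetDual_pos hK hρ₀ hw hc hwc))
  convert hpot.div_const (posIntegrable_fortetPotential hK hρ₀ hρ₁ hw hc hwc).integral_pos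
    (posIntegrable_fortetPotential hK hρ₀ hρ₁ hw' hc' hwc').integral_pos using 1
  · ring
  · rfl
  · rfl

/-- The normalizing constant is `1`: pairing the potential with `ρ₀ / w` and moving the kernel to
the other side (Fubini) turns `∫ ρ₀` into `∫ ρ₁`. -/
theorem fortetPotential_eq_of_fortetMap_eq (hK : KernelBounds K m M) (hρ₀ : PosIntegrable μ ρ₀)
    (hρ₁ : PosIntegrable ν ρ₁) (hmass : ∫ x, ρ₀ x ∂μ = ∫ y, ρ₁ y ∂ν) (hw : Measurable w)
    (hc : 0 < c) (hwc : ∀ x, c ≤ w x) (hfix : fortetMap μ ν ρ₀ ρ₁ K w = w) :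
    fortetPotential μ ν ρ₀ ρ₁ K w = w := by
  have hZ := (posIntegrable_fortetPotential hK hρ₀ hρ₁ hw hc hwc).integral_pos
  have hP x : fortetPotential μ ν ρ₀ ρ₁ K w x
      = (∫ z, fortetPotential μ ν ρ₀ ρ₁ K w z ∂μ) * w x := by
    rw [← congrFun hfix x]
    exact (mul_div_cancel₀ _ hZ.ne').symm
  have hpair : ∫ x, (ρ₀ / w) x * fortetPotential μ ν ρ₀ ρ₁ K w x ∂μ
      = ∫ y, fortetDual μ ρ₀ K w y * (ρ₁ / fortetDual μ ρ₀ K w) y ∂ν :=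
    hK.integral_mul_kernelOp (hρ₀.div hw hc hwc).integrable
      (posIntegrable_div_fortetDual hK hρ₀ hρ₁ hw hc hwc).integrable
  have hL : ∫ x, (ρ₀ / w) x * fortetPotential μ ν ρ₀ ρ₁ K w x ∂μ
      = (∫ z, fortetPotential μ ν ρ₀ ρ₁ K w z ∂μ) * ∫ x, ρ₀ x ∂μ := by
    rw [← integral_const_mul]
    refine integral_congr_ae (ae_of_all _ fun x => ?_)
    dsimp only
    rw [hP x, Pi.div_apply]
    field_simp [(hc.trans_le (hwc x)).ne']
  have hR : ∫ y, fortetDual μ ρ₀ K w y * (ρ₁ / fortetDual μ ρ₀ K w) y ∂ν = ∫ y, ρ₁ y ∂ν :=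
    integral_congr_ae (ae_of_all _ fun y =>
      mul_div_cancel₀ _ (fortetDual_pos hK hρ₀ hw hc hwc y).ne')
  have h1 : ∫ z, fortetPotential μ ν ρ₀ ρ₁ K w z ∂μ = 1 := by
    rw [hL, hR, ← hmass] at hpair
    exact (mul_eq_right₀ hρ₀.integral_pos.ne').1 hpair
  funext x
  rw [hP, h1, one_mul]

theorem exists_schrodinger_system (hK : KernelBounds K m M) (hρ₀ : PosIntegrable μ ρ₀)
    (hρ₁ : PosIntegrable ν ρ₁) (hmass : ∫ x, ρ₀ x ∂μ = ∫ y, ρ₁ y ∂ν) :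
    ∃ (φ₀ ψ₀ : X → ℝ) (φ₁ ψ₁ : Y → ℝ),
      Measurable φ₀ ∧ Measurable ψ₀ ∧ Measurable φ₁ ∧ Measurable ψ₁ ∧
      (∀ x, 0 ≤ φ₀ x ∧ 0 ≤ ψ₀ x) ∧ (∀ y, 0 ≤ φ₁ y ∧ 0 ≤ ψ₁ y) ∧
      (∀ x, φ₀ x = ∫ y, K x y * φ₁ y ∂ν) ∧ (∀ y, ψ₁ y = ∫ x, K x y * ψ₀ x ∂μ) ∧
      (∀ x, ρ₀ x = φ₀ x * ψ₀ x) ∧ (∀ y, ρ₁ y = φ₁ y * ψ₁ y) := by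
  have := NeZero.mk hρ₀.ne_zero
  have hV : 0 < μ.real univ := measureReal_univ_pos
  have hM : 0 < M := hK.pos.trans_le hK.le
  have hc : 0 < m / (M * μ.real univ) := by have := hK.pos; positivity
  have hcC : m / (M * μ.real univ) ≤ M / (m * μ.real univ) := by
    rw [div_le_div_iff₀ (by positivity) (by have := hK.pos; positivity)]
    nlinarith [mul_le_mul_of_nonneg_right (mul_self_le_mul_self hK.pos.le hK.le) hV.le]
  have hκ : (1 - m / M) ^ 2 < 1 :=
    pow_lt_one₀ (sub_nonneg.2 (div_le_one_of_le₀ hK.le hM.le))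
      (sub_lt_self _ (div_pos hK.pos hM)) two_ne_zero
  obtain ⟨w, hw, hfix⟩ := exists_fixedPoint_of_ratioLE (μ := μ) hc hcC (sq_nonneg _) hκ
    (fun w hw => fortetMap_mem hK hρ₀ hρ₁ hw.1 hc fun x => (hw.2 x).1)
    (fun w hw => integral_fortetMap hK hρ₀ hρ₁ hw.1 hc fun x => (hw.2 x).1)
    (fun w hw w' hw' _ h => ratioLE_fortetMap hK hρ₀ hρ₁ hw.1 hc (fun x => (hw.2 x).1)
      hw'.1 hc (fun x => (hw'.2 x).1) h)
  have hwc x : m / (M * μ.real univ) ≤ w x := (hw.2 x).1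
  have hD := fortetDual_pos hK hρ₀ hw.1 hc hwc
  have hψ₀ := hρ₀.div hw.1 hc hwc
  have hφ₁ := posIntegrable_div_fortetDual hK hρ₀ hρ₁ hw.1 hc hwc
  refine ⟨w, ρ₀ / w, ρ₁ / fortetDual μ ρ₀ K w, fortetDual μ ρ₀ K w, hw.1, hψ₀.measurable,
    hφ₁.measurable, hK.symm.measurable_kernelOp hψ₀.measurable,
    fun x => ⟨(hc.trans_le (hwc x)).le, hψ₀.nonneg x⟩, fun y => ⟨hφ₁.nonneg y, (hD y).le⟩,
    fun x => congrFun (fortetPotential_eq_of_fortetMap_eq hK hρ₀ hρ₁ hmass hw.1 hc hwc hfix).symm x,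
    fun y => rfl, fun x => (mul_div_cancel₀ _ (hc.trans_le (hwc x)).ne').symm,
    fun y => (div_mul_cancel₀ _ (hD y).ne').symm⟩

end Fortet

theorem exists_kernelBounds_eqOn [TopologicalSpace X] [TopologicalSpace Y] [T2Space X]
    [T2Space Y] [MeasurableSpace X] [MeasurableSpace Y] [OpensMeasurableSpace (X × Y)]
    {s : Set (X × Y)} (hs : IsCompact s) {q : X → Y → ℝ} (hq : ContinuousOn (Function.uncurry q) s)
    (hpos : ∀ p ∈ s, 0 < Function.uncurry q p) :
    ∃ K m M, KernelBounds K m M ∧ EqOn (Function.uncurry K) (Function.uncurry q) s := by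
  classical
  obtain ⟨m, hm, hmq⟩ := hs.exists_forall_le' hq hpos
  obtain ⟨C, hC⟩ := hs.exists_bound_of_continuousOn hq
  refine ⟨fun x y => s.piecewise (Function.uncurry q) (fun _ => m) (x, y), m, max C m,
    ⟨hq.measurable_piecewise continuousOn_const hs.isClosed.measurableSet, hm, le_max_right _ _,
      fun x y => ?_⟩, fun p hp => s.piecewise_eq_of_mem (Function.uncurry q) (fun _ => m) hp⟩
  by_cases h : (x, y) ∈ s
  · rw [s.piecewise_eq_of_mem _ _ h]
    exact ⟨hmq _ h, ((le_abs_self _).trans (hC _ h)).trans (le_max_left _ _)⟩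
  · rw [s.piecewise_eq_of_notMem _ _ h]
    exact ⟨le_rfl, le_max_right _ _⟩

/-- existence of a solution of the Schrödinger system on compact
supports `S₀, S₁` for a continuous strictly positive kernel `q`. -/
theorem schroedinger_system_exists (n : ℕ)
    (S₀ S₁ : Set (EuclideanSpace ℝ (Fin n)))
    (hS₀ : IsCompact S₀) (hS₁ : IsCompact S₁)
    (ρ₀ ρ₁ : EuclideanSpace ℝ (Fin n) → ℝ)
    (hρ₀m : Measurable ρ₀) (hρ₁m : Measurable ρ₁)
    (hρ₀nn : ∀ x ∈ S₀, 0 ≤ ρ₀ x) (hρ₁nn : ∀ x ∈ S₁, 0 ≤ ρ₁ x)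
    (hρ₀int : ∫ x in S₀, ρ₀ x = 1) (hρ₁int : ∫ x in S₁, ρ₁ x = 1)
    (q : EuclideanSpace ℝ (Fin n) → EuclideanSpace ℝ (Fin n) → ℝ)
    (hqc : ContinuousOn (fun p : EuclideanSpace ℝ (Fin n) × EuclideanSpace ℝ (Fin n) =>
      q p.1 p.2) (S₀ ×ˢ S₁))
    (hqpos : ∀ x ∈ S₀, ∀ y ∈ S₁, 0 < q x y) :
    ∃ φ₀ ψ₀ φ₁ ψ₁ : EuclideanSpace ℝ (Fin n) → ℝ,
      Measurable φ₀ ∧ Measurable ψ₀ ∧ Measurable φ₁ ∧ Measurable ψ₁ ∧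
      (∀ x ∈ S₀, 0 ≤ φ₀ x ∧ 0 ≤ ψ₀ x) ∧
      (∀ x ∈ S₁, 0 ≤ φ₁ x ∧ 0 ≤ ψ₁ x) ∧
      (∀ x ∈ S₀, φ₀ x = ∫ y in S₁, q x y * φ₁ y) ∧
      (∀ x ∈ S₁, ψ₁ x = ∫ y in S₀, q y x * ψ₀ y) ∧
      (∀ᵐ x ∂(volume.restrict S₀), ρ₀ x = φ₀ x * ψ₀ x) ∧
      (∀ᵐ x ∂(volume.restrict S₁), ρ₁ x = φ₁ x * ψ₁ x) := by
  have hS₀m := hS₀.isClosed.measurableSet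
  have hS₁m := hS₁.isClosed.measurableSet
  have : IsFiniteMeasure (volume.restrict S₀) := isFiniteMeasure_restrict.2 hS₀.measure_lt_top.ne
  have : IsFiniteMeasure (volume.restrict S₁) := isFiniteMeasure_restrict.2 hS₁.measure_lt_top.ne
  have hρ₀' : ∫ x in S₀, max (ρ₀ x) 0 = 1 :=
    (setIntegral_congr_fun hS₀m fun x hx => max_eq_left (hρ₀nn x hx)).trans hρ₀int
  have hρ₁' : ∫ x in S₁, max (ρ₁ x) 0 = 1 :=
    (setIntegral_congr_fun hS₁m fun x hx => max_eq_left (hρ₁nn x hx)).trans hρ₁int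
  obtain ⟨K, m, M, hK, hKq⟩ :=
    exists_kernelBounds_eqOn (hS₀.prod hS₁) hqc fun p hp => hqpos _ hp.1 _ hp.2
  obtain ⟨φ₀, ψ₀, φ₁, ψ₁, hφ₀m, hψ₀m, hφ₁m, hψ₁m, h₀, h₁, hφ₀, hψ₁, hρ₀, hρ₁⟩ :=
    exists_schrodinger_system hK (posIntegrable_max_zero hρ₀m (hρ₀' ▸ one_pos))
      (posIntegrable_max_zero hρ₁m (hρ₁' ▸ one_pos)) (hρ₀'.trans hρ₁'.symm)
  refine ⟨φ₀, ψ₀, φ₁, ψ₁, hφ₀m, hψ₀m, hφ₁m, hψ₁m, fun x _ => h₀ x, fun y _ => h₁ y,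
    fun x hx => ?_, fun y hy => ?_, ae_restrict_of_forall_mem hS₀m fun x hx => ?_,
    ae_restrict_of_forall_mem hS₁m fun y hy => ?_⟩
  · rw [hφ₀]
    exact setIntegral_congr_fun hS₁m fun y hy => congrArg (· * φ₁ y) (hKq (mk_mem_prod hx hy))
  · rw [hψ₁]
    exact setIntegral_congr_fun hS₀m fun x hx => congrArg (· * ψ₀ x) (hKq (mk_mem_prod hx hy))
  · rw [← hρ₀, max_eq_left (hρ₀nn x hx)]
  · rw [← hρ₁, max_eq_left (hρ₁nn y hy)]
end
end

section
/- Let S₀, S₁ ⊆ ℝⁿ be compact sets, let ρ₀ and ρ₁ be probability densities on S₀ and S₁ respectively, and let q : S₀ × S₁ → ℝ be continuous and strictly positive. Suppose (φ₀, φ̂₀, φ₁, φ̂₁) and (φ₀', φ̂₀', φ₁', φ̂₁') are two quadruples of nonnegative measurable functions, each satisfying the Schrödinger system: φ₀(x) = ∫_{S₁} q(x,y) φ₁(y) dy, φ̂₁(x) = ∫_{S₀} q(y,x) φ̂₀(y) dy, ρ₀ = φ₀ φ̂₀ a.e. on S₀, and ρ₁ = φ₁ φ̂₁ a.e. on S₁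 (and the same with primes). Then there exists a constant c > 0 such that φ₀' = c φ₀, φ₁' = c φ₁, φ̂₀' = c^{-1} φ̂₀ and φ̂₁' = c^{-1} φ̂₁ almost everywhere on the sets where ρ₀ (respectively ρ₁) is positive. -/
/-!
For a solution of the Schrödinger system, `π(x, y) = q(x, y) ψ₀(x) φ₁(y)` is a density with
marginals `ρ₀` and `ρ₁`. Since `q` is bounded above and away from `0` on the compact set
`S₀ × S₁`, so are the potentials `φ₀ = ∫ q φ₁` and `ψ₁ = ∫ q ψ₀`. Hence for a second solution
`ψ₀' = (φ₀ / φ₀') ψ₀` and `φ₁' = (ψ₁ / ψ₁') φ₁`, so `π' = exp (g(x) + h(y)) π` with bounded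
`g = log φ₀ - log φ₀'` and `h = log ψ₁ - log ψ₁'`. As `π` and `π'` have the same marginals,
`∫ (π' - π) (g(x) + h(y)) = 0`, while the integrand `(exp s - 1) s π` is nonnegative; hence
`π' = π`. Thus `ψ₀' ⊗ φ₁' = ψ₀ ⊗ φ₁`, which forces `ψ₀' = c⁻¹ ψ₀` and `φ₁' = c φ₁`, and the
integral equations transport this to `φ₀` and `ψ₁`.
-/

open MeasureTheory Real Set Filter

lemma exp_sub_one_mul_self_nonneg (s : ℝ) : 0 ≤ (exp s - 1) * s := by
  rcases le_total 0 s with hs | hs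
  · exact mul_nonneg (sub_nonneg.2 (one_le_exp hs)) hs
  · exact mul_nonneg_of_nonpos_of_nonpos (sub_nonpos.2 (exp_le_one_iff.2 hs)) hs

lemma exp_sub_one_mul_self_eq_zero_iff {s : ℝ} : (exp s - 1) * s = 0 ↔ s = 0 := by
  simp [sub_eq_zero]

lemma abs_log_le_of_mem_Icc {a b x : ℝ} (ha : 0 < a) (hx : x ∈ Icc a b) :
    |log x| ≤ |log a| + |log b| := by
  have hab := log_le_log ha hx.1
  have hxb := log_le_log (ha.trans_le hx.1) hx.2
  rw [abs_le]
  constructor <;> linarith [neg_abs_le (log a), le_abs_self (log b), abs_nonneg (log a),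
    abs_nonneg (log b)]

lemma IsCompact.exists_forall_mem_Icc_of_pos {X : Type*} [TopologicalSpace X] {s : Set X}
    (hs : IsCompact s) (hne : s.Nonempty) {f : X → ℝ} (hf : ContinuousOn f s)
    (hpos : ∀ x ∈ s, 0 < f x) : ∃ ε M, 0 < ε ∧ ∀ x ∈ s, f x ∈ Icc ε M := by
  obtain ⟨a, ha, hmin⟩ := hs.exists_isMinOn hne hf
  obtain ⟨b, -, hmax⟩ := hs.exists_isMaxOn hne hf
  exact ⟨f a, f b, hpos a ha, fun x hx => ⟨hmin hx, hmax hx⟩⟩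

variable {α β : Type*} [MeasurableSpace α] [MeasurableSpace β] {μ : Measure α} {ν : Measure β}

section KernelBounds

variable {k f : β → ℝ} {ε M : ℝ}

lemma integrable_of_integral_mul_ne_zero (hε : 0 < ε) (hk : ∀ᵐ y ∂ν, ε ≤ k y)
    (hf : AEStronglyMeasurable f ν) (hf₀ : 0 ≤ᵐ[ν] f) (h : ∫ y, k y * f y ∂ν ≠ 0) :
    Integrable f ν := by
  refine ((Integrable.of_integral_ne_zero h).const_mul ε⁻¹).mono' hf ?_
  filter_upwards [hk, hf₀] with y hky hfy
  rw [norm_of_nonneg hfy, inv_mul_eq_div, le_div_iff₀ hε, mul_comm]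
  exact mul_le_mul_of_nonneg_right hky hfy

lemma integral_mul_mem_Icc (hε : 0 ≤ ε) (hk : AEStronglyMeasurable k ν)
    (hkb : ∀ᵐ y ∂ν, k y ∈ Icc ε M) (hf : Integrable f ν) (hf₀ : 0 ≤ᵐ[ν] f) :
    ∫ y, k y * f y ∂ν ∈ Icc (ε * ∫ y, f y ∂ν) (M * ∫ y, f y ∂ν) := by
  have hkf : Integrable (fun y => k y * f y) ν := by
    refine hf.bdd_mul hk (c := M) ?_
    filter_upwards [hkb] with y hy
    rw [norm_of_nonneg (hε.trans hy.1)]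
    exact hy.2
  rw [← integral_const_mul, ← integral_const_mul]
  constructor
  · refine integral_mono_ae (hf.const_mul ε) hkf ?_
    filter_upwards [hkb, hf₀] with y hy hfy
    exact mul_le_mul_of_nonneg_right hy.1 hfy
  · refine integral_mono_ae hkf (hf.const_mul M) ?_
    filter_upwards [hkb, hf₀] with y hy hfy
    exact mul_le_mul_of_nonneg_right hy.2 hfy

end KernelBounds

section Product

variable [SFinite μ] [SFinite ν]

lemma ae_prod_swap {p : α × β → Prop} (h : ∀ᵐ z ∂μ.prod ν, p z) :
    ∀ᵐ w ∂ν.prod μ, p w.swap :=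
  Measure.measurePreserving_swap.quasiMeasurePreserving.ae h

lemma integral_mul_comp_fst_eq_zero {F : α × β → ℝ} (hF : Integrable F (μ.prod ν))
    (hF₀ : ∀ᵐ x ∂μ, ∫ y, F (x, y) ∂ν = 0) {g : α → ℝ} {C : ℝ}
    (hg : AEStronglyMeasurable g μ) (hgC : ∀ᵐ x ∂μ, |g x| ≤ C) :
    ∫ z, F z * g z.1 ∂μ.prod ν = 0 := by
  rw [integral_prod _ (hF.mul_bdd hg.comp_fst (Measure.quasiMeasurePreserving_fst.ae hgC))]
  refine integral_eq_zero_of_ae ?_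
  filter_upwards [hF₀] with x hx
  simp [integral_mul_const, hx]

lemma integral_mul_comp_snd_eq_zero {F : α × β → ℝ} (hF : Integrable F (μ.prod ν))
    (hF₀ : ∀ᵐ y ∂ν, ∫ x, F (x, y) ∂μ = 0) {h : β → ℝ} {C : ℝ}
    (hh : AEStronglyMeasurable h ν) (hhC : ∀ᵐ y ∂ν, |h y| ≤ C) :
    ∫ z, F z * h z.2 ∂μ.prod ν = 0 := by
  rw [integral_prod_symm _ (hF.mul_bdd hh.comp_snd (Measure.quasiMeasurePreserving_snd.ae hhC))]
  refine integral_eq_zero_of_ae ?_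
  filter_upwards [hF₀] with y hy
  simp [integral_mul_const, hy]

lemma integral_sub_mul_add_eq_zero {P P' : α × β → ℝ} (hP : Integrable P (μ.prod ν))
    (hP' : Integrable P' (μ.prod ν)) (h₀ : ∀ᵐ x ∂μ, ∫ y, P' (x, y) ∂ν = ∫ y, P (x, y) ∂ν)
    (h₁ : ∀ᵐ y ∂ν, ∫ x, P' (x, y) ∂μ = ∫ x, P (x, y) ∂μ) {g : α → ℝ} {h : β → ℝ} {C D : ℝ}
    (hg : AEStronglyMeasurable g μ) (hgC : ∀ᵐ x ∂μ, |g x| ≤ C)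
    (hh : AEStronglyMeasurable h ν) (hhD : ∀ᵐ y ∂ν, |h y| ≤ D) :
    ∫ z, (P' - P) z * (g z.1 + h z.2) ∂μ.prod ν = 0 := by
  have hd : Integrable (P' - P) (μ.prod ν) := hP'.sub hP
  have hd₀ : ∀ᵐ x ∂μ, ∫ y, (P' - P) (x, y) ∂ν = 0 := by
    filter_upwards [h₀, hP'.prod_right_ae, hP.prod_right_ae] with x hx hi' hi
    rw [Pi.sub_def, integral_sub hi' hi, hx, sub_self]
  have hd₁ : ∀ᵐ y ∂ν, ∫ x, (P' - P) (x, y) ∂μ = 0 := by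
    filter_upwards [h₁, hP'.prod_left_ae, hP.prod_left_ae] with y hy hi' hi
    rw [Pi.sub_def, integral_sub hi' hi, hy, sub_self]
  simp_rw [mul_add]
  rw [integral_add (hd.mul_bdd hg.comp_fst (Measure.quasiMeasurePreserving_fst.ae hgC))
    (hd.mul_bdd hh.comp_snd (Measure.quasiMeasurePreserving_snd.ae hhD)),
    integral_mul_comp_fst_eq_zero hd hd₀ hg hgC, integral_mul_comp_snd_eq_zero hd hd₁ hh hhD,
    add_zero]

theorem ae_eq_of_marginals_eq_of_ae_eq_exp_mul {P P' : α × β → ℝ}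
    (hP : Integrable P (μ.prod ν)) (hP₀ : 0 ≤ᵐ[μ.prod ν] P) {g : α → ℝ} {h : β → ℝ} {C D : ℝ}
    (hg : AEStronglyMeasurable g μ) (hgC : ∀ᵐ x ∂μ, |g x| ≤ C)
    (hh : AEStronglyMeasurable h ν) (hhD : ∀ᵐ y ∂ν, |h y| ≤ D)
    (hP' : P' =ᵐ[μ.prod ν] fun z => exp (g z.1 + h z.2) * P z)
    (h₀ : ∀ᵐ x ∂μ, ∫ y, P' (x, y) ∂ν = ∫ y, P (x, y) ∂ν)
    (h₁ : ∀ᵐ y ∂ν, ∫ x, P' (x, y) ∂μ = ∫ x, P (x, y) ∂μ) :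
    P' =ᵐ[μ.prod ν] P := by
  have hs : AEStronglyMeasurable (fun z : α × β => g z.1 + h z.2) (μ.prod ν) :=
    hg.comp_fst.add hh.comp_snd
  have hsCD : ∀ᵐ z ∂μ.prod ν, |g z.1 + h z.2| ≤ C + D := by
    filter_upwards [Measure.quasiMeasurePreserving_fst.ae hgC,
      Measure.quasiMeasurePreserving_snd.ae hhD] with z hgz hhz
    exact (abs_add_le _ _).trans (add_le_add hgz hhz)
  have hPi' : Integrable P' (μ.prod ν) := by
    refine (hP.bdd_mul (continuous_exp.comp_aestronglyMeasurable hs) (c := exp (C + D)) ?_).congr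
      hP'.symm
    filter_upwards [hsCD] with z hz
    rw [norm_of_nonneg (exp_pos _).le]
    exact exp_le_exp.2 ((le_abs_self _).trans hz)
  have hW : Integrable (fun z => (P' - P) z * (g z.1 + h z.2)) (μ.prod ν) :=
    (hPi'.sub hP).mul_bdd hs hsCD
  have hW_eq : ∀ᵐ z ∂μ.prod ν,
      (P' - P) z * (g z.1 + h z.2) = (exp (g z.1 + h z.2) - 1) * (g z.1 + h z.2) * P z := by
    filter_upwards [hP'] with z hz
    rw [Pi.sub_apply, hz]
    ring
  have hW₀ : 0 ≤ᵐ[μ.prod ν] fun z => (P' - P) z * (g z.1 + h z.2) := by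
    filter_upwards [hW_eq, hP₀] with z hz hPz
    exact hz ▸ mul_nonneg (exp_sub_one_mul_self_nonneg _) hPz
  filter_upwards [(integral_eq_zero_iff_of_nonneg_ae hW₀ hW).1
    (integral_sub_mul_add_eq_zero hP hPi' h₀ h₁ hg hgC hh hhD), hW_eq, hP'] with z hz hz_eq hz'
  rcases mul_eq_zero.1 (hz_eq ▸ hz) with hs₀ | hPz
  · rw [hz', exp_sub_one_mul_self_eq_zero_iff.1 hs₀, exp_zero, one_mul]
  · rw [hz', hPz, mul_zero]

lemma exists_ae_eq_smul_of_ae_mul_eq {f f' : α → ℝ} {g g' : β → ℝ}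
    (h : ∀ᵐ z ∂μ.prod ν, f' z.1 * g' z.2 = f z.1 * g z.2) (hf : 0 < ∫ x, f x ∂μ)
    (hf' : 0 < ∫ x, f' x ∂μ) (hg : ∫ y, g y ∂ν ≠ 0) :
    ∃ c : ℝ, 0 < c ∧ f' =ᵐ[μ] c⁻¹ • f ∧ g' =ᵐ[ν] c • g := by
  set c := (∫ x, f x ∂μ) / ∫ x, f' x ∂μ
  have hg' : g' =ᵐ[ν] c • g := by
    filter_upwards [Measure.ae_ae_of_ae_prod (ae_prod_swap h)] with y hy
    have hy' : ∫ x, f' x * g' y ∂μ = ∫ x, f x * g y ∂μ := integral_congr_ae hy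
    rw [integral_mul_const, integral_mul_const] at hy'
    simp only [Pi.smul_apply, smul_eq_mul, c]
    field_simp
    linarith
  have hIg' : ∫ y, g' y ∂ν = c * ∫ y, g y ∂ν := by
    rw [integral_congr_ae hg', ← integral_const_mul]
    rfl
  have hc : 0 < c := div_pos hf hf'
  refine ⟨c, hc, ?_, hg'⟩
  filter_upwards [Measure.ae_ae_of_ae_prod h] with x hx
  have hx' : ∫ y, f' x * g' y ∂ν = ∫ y, f x * g y ∂ν := integral_congr_ae hx
  rw [integral_const_mul, integral_const_mul, hIg', ← mul_assoc] at hx'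
  rw [Pi.smul_apply, smul_eq_mul, ← mul_right_cancel₀ hg hx', mul_comm (f' x),
    inv_mul_cancel_left₀ hc.ne']

end Product

structure SchroedingerSystem (μ : Measure α) (ν : Measure β) (q : α → β → ℝ) (ρ₀ : α → ℝ)
    (ρ₁ : β → ℝ) (φ₀ ψ₀ : α → ℝ) (φ₁ ψ₁ : β → ℝ) : Prop where
  aestronglyMeasurable_φ₀ : AEStronglyMeasurable φ₀ μ
  aestronglyMeasurable_ψ₀ : AEStronglyMeasurable ψ₀ μ
  aestronglyMeasurable_φ₁ : AEStronglyMeasurable φ₁ ν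
  aestronglyMeasurable_ψ₁ : AEStronglyMeasurable ψ₁ ν
  ψ₀_nonneg : 0 ≤ᵐ[μ] ψ₀
  φ₁_nonneg : 0 ≤ᵐ[ν] φ₁
  φ₀_eq : ∀ᵐ x ∂μ, φ₀ x = ∫ y, q x y * φ₁ y ∂ν
  ψ₁_eq : ∀ᵐ y ∂ν, ψ₁ y = ∫ x, q x y * ψ₀ x ∂μ
  ρ₀_eq : ρ₀ =ᵐ[μ] φ₀ * ψ₀
  ρ₁_eq : ρ₁ =ᵐ[ν] φ₁ * ψ₁

def schroedingerCoupling (q : α → β → ℝ) (ψ₀ : α → ℝ) (φ₁ : β → ℝ) (z : α × β) : ℝ :=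
  q z.1 z.2 * (ψ₀ z.1 * φ₁ z.2)

section Coupling

variable {q : α → β → ℝ} {ψ₀ : α → ℝ} {φ₁ : β → ℝ} {M : ℝ}

lemma integrable_schroedingerCoupling [SFinite ν]
    (hqm : AEStronglyMeasurable (fun z : α × β => q z.1 z.2) (μ.prod ν))
    (hqM : ∀ᵐ z ∂μ.prod ν, |q z.1 z.2| ≤ M) (hψ₀ : Integrable ψ₀ μ) (hφ₁ : Integrable φ₁ ν) :
    Integrable (schroedingerCoupling q ψ₀ φ₁) (μ.prod ν) :=
  (hψ₀.mul_prod hφ₁).bdd_mul hqm hqM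

lemma schroedingerCoupling_nonneg (hq : ∀ᵐ z ∂μ.prod ν, 0 ≤ q z.1 z.2) (hψ₀ : 0 ≤ᵐ[μ] ψ₀)
    (hφ₁ : 0 ≤ᵐ[ν] φ₁) : 0 ≤ᵐ[μ.prod ν] schroedingerCoupling q ψ₀ φ₁ := by
  filter_upwards [hq, Measure.quasiMeasurePreserving_fst.ae hψ₀,
    Measure.quasiMeasurePreserving_snd.ae hφ₁] with z hqz hψz hφz
  exact mul_nonneg hqz (mul_nonneg hψz hφz)

lemma schroedingerCoupling_ae_eq_exp_mul {ψ₀' : α → ℝ} {φ₁' : β → ℝ} {g : α → ℝ} {h : β → ℝ}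
    (hψ₀' : ψ₀' =ᵐ[μ] fun x => exp (g x) * ψ₀ x)
    (hφ₁' : φ₁' =ᵐ[ν] fun y => exp (h y) * φ₁ y) :
    schroedingerCoupling q ψ₀' φ₁' =ᵐ[μ.prod ν]
      fun z => exp (g z.1 + h z.2) * schroedingerCoupling q ψ₀ φ₁ z := by
  filter_upwards [Measure.quasiMeasurePreserving_fst.ae hψ₀',
    Measure.quasiMeasurePreserving_snd.ae hφ₁'] with z hψz hφz
  simp only [schroedingerCoupling, hψz, hφz, exp_add]
  ring

end Coupling

namespace SchroedingerSystem

variable {q : α → β → ℝ} {ρ₀ : α → ℝ} {ρ₁ : β → ℝ} {φ₀ ψ₀ φ₀' ψ₀' : α → ℝ}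
  {φ₁ ψ₁ φ₁' ψ₁' : β → ℝ} {ε M : ℝ}

lemma of_restrict {s : Set α} {t : Set β} (hs : MeasurableSet s) (ht : MeasurableSet t)
    (hφ₀m : Measurable φ₀) (hψ₀m : Measurable ψ₀) (hφ₁m : Measurable φ₁) (hψ₁m : Measurable ψ₁)
    (hψ₀ : ∀ x ∈ s, 0 ≤ ψ₀ x) (hφ₁ : ∀ y ∈ t, 0 ≤ φ₁ y)
    (hφ₀ : ∀ x ∈ s, φ₀ x = ∫ y in t, q x y * φ₁ y ∂ν)
    (hψ₁ : ∀ y ∈ t, ψ₁ y = ∫ x in s, q x y * ψ₀ x ∂μ)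
    (hρ₀ : ∀ᵐ x ∂μ.restrict s, ρ₀ x = φ₀ x * ψ₀ x) (hρ₁ : ∀ᵐ y ∂ν.restrict t, ρ₁ y = φ₁ y * ψ₁ y) :
    SchroedingerSystem (μ.restrict s) (ν.restrict t) q ρ₀ ρ₁ φ₀ ψ₀ φ₁ ψ₁ where
  aestronglyMeasurable_φ₀ := hφ₀m.aestronglyMeasurable
  aestronglyMeasurable_ψ₀ := hψ₀m.aestronglyMeasurable
  aestronglyMeasurable_φ₁ := hφ₁m.aestronglyMeasurable
  aestronglyMeasurable_ψ₁ := hψ₁m.aestronglyMeasurable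
  ψ₀_nonneg := ae_restrict_of_forall_mem hs hψ₀
  φ₁_nonneg := ae_restrict_of_forall_mem ht hφ₁
  φ₀_eq := ae_restrict_of_forall_mem hs hφ₀
  ψ₁_eq := ae_restrict_of_forall_mem ht hψ₁
  ρ₀_eq := hρ₀
  ρ₁_eq := hρ₁

variable (h : SchroedingerSystem μ ν q ρ₀ ρ₁ φ₀ ψ₀ φ₁ ψ₁)
include h

theorem symm : SchroedingerSystem ν μ (fun y x => q x y) ρ₁ ρ₀ ψ₁ φ₁ ψ₀ φ₀ where
  aestronglyMeasurable_φ₀ := h.aestronglyMeasurable_ψ₁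
  aestronglyMeasurable_ψ₀ := h.aestronglyMeasurable_φ₁
  aestronglyMeasurable_φ₁ := h.aestronglyMeasurable_ψ₀
  aestronglyMeasurable_ψ₁ := h.aestronglyMeasurable_φ₀
  ψ₀_nonneg := h.φ₁_nonneg
  φ₁_nonneg := h.ψ₀_nonneg
  φ₀_eq := h.ψ₁_eq
  ψ₁_eq := h.φ₀_eq
  ρ₀_eq := h.ρ₁_eq.trans (.of_eq (mul_comm _ _))
  ρ₁_eq := h.ρ₀_eq.trans (.of_eq (mul_comm _ _))

lemma frequently_φ₀_ne_zero (hρ₀ : ∫ x, ρ₀ x ∂μ ≠ 0) : ∃ᵐ x ∂μ, φ₀ x ≠ 0 := by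
  refine not_eventually.1 fun hφ₀ => hρ₀ (integral_eq_zero_of_ae ?_)
  filter_upwards [h.ρ₀_eq, hφ₀] with x hρ hφ
  simp [hρ, hφ]

lemma integral_schroedingerCoupling_fst :
    ∀ᵐ x ∂μ, ∫ y, schroedingerCoupling q ψ₀ φ₁ (x, y) ∂ν = ρ₀ x := by
  filter_upwards [h.φ₀_eq, h.ρ₀_eq] with x hφ hρ
  simp only [schroedingerCoupling]
  simp_rw [mul_left_comm _ (ψ₀ x)]
  rw [integral_const_mul, ← hφ, hρ, Pi.mul_apply, mul_comm]

lemma integral_schroedingerCoupling_snd :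
    ∀ᵐ y ∂ν, ∫ x, schroedingerCoupling q ψ₀ φ₁ (x, y) ∂μ = ρ₁ y := by
  filter_upwards [h.ψ₁_eq, h.ρ₁_eq] with y hψ hρ
  simp only [schroedingerCoupling]
  simp_rw [← mul_assoc]
  rw [integral_mul_const, ← hψ, hρ, Pi.mul_apply, mul_comm]

lemma ψ₀_ae_eq_exp_mul (h' : SchroedingerSystem μ ν q ρ₀ ρ₁ φ₀' ψ₀' φ₁' ψ₁')
    (hφ₀ : ∀ᵐ x ∂μ, 0 < φ₀ x) (hφ₀' : ∀ᵐ x ∂μ, 0 < φ₀' x) :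
    ψ₀' =ᵐ[μ] fun x => exp (log (φ₀ x) - log (φ₀' x)) * ψ₀ x := by
  filter_upwards [h.ρ₀_eq, h'.ρ₀_eq, hφ₀, hφ₀'] with x hρ hρ' hφ hφ'
  rw [exp_sub, exp_log hφ, exp_log hφ', div_mul_eq_mul_div, eq_div_iff hφ'.ne', mul_comm,
    ← Pi.mul_apply, ← hρ', hρ, Pi.mul_apply]

lemma φ₀_ae_eq_smul (h' : SchroedingerSystem μ ν q ρ₀ ρ₁ φ₀' ψ₀' φ₁' ψ₁') {c : ℝ}
    (hφ₁ : φ₁' =ᵐ[ν] c • φ₁) : φ₀' =ᵐ[μ] c • φ₀ := by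
  filter_upwards [h.φ₀_eq, h'.φ₀_eq] with x hx hx'
  rw [hx', Pi.smul_apply, hx, smul_eq_mul, ← integral_const_mul]
  refine integral_congr_ae ?_
  filter_upwards [hφ₁] with y hy
  rw [hy, Pi.smul_apply, smul_eq_mul, mul_left_comm]

variable [SFinite ν]

lemma integrable_φ₁ (hε : 0 < ε) (hq : ∀ᵐ z ∂μ.prod ν, q z.1 z.2 ∈ Icc ε M)
    (hρ₀ : ∫ x, ρ₀ x ∂μ ≠ 0) : Integrable φ₁ ν := by
  obtain ⟨x, hφx, hx, hqx⟩ := ((h.frequently_φ₀_ne_zero hρ₀).and_eventually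
    (h.φ₀_eq.and (Measure.ae_ae_of_ae_prod hq))).exists
  exact integrable_of_integral_mul_ne_zero hε (hqx.mono fun _ hy => hy.1)
    h.aestronglyMeasurable_φ₁ h.φ₁_nonneg (hx ▸ hφx)

lemma ae_φ₀_mem_Icc (hε : 0 < ε)
    (hqm : AEStronglyMeasurable (fun z : α × β => q z.1 z.2) (μ.prod ν))
    (hq : ∀ᵐ z ∂μ.prod ν, q z.1 z.2 ∈ Icc ε M) (hρ₀ : ∫ x, ρ₀ x ∂μ ≠ 0) :
    ∀ᵐ x ∂μ, φ₀ x ∈ Icc (ε * ∫ y, φ₁ y ∂ν) (M * ∫ y, φ₁ y ∂ν) := by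
  filter_upwards [h.φ₀_eq, Measure.ae_ae_of_ae_prod hq, hqm.prodMk_left] with x hx hqx hqmx
  rw [hx]
  exact integral_mul_mem_Icc hε.le hqmx hqx (h.integrable_φ₁ hε hq hρ₀) h.φ₁_nonneg

lemma integral_φ₁_pos (hε : 0 < ε)
    (hqm : AEStronglyMeasurable (fun z : α × β => q z.1 z.2) (μ.prod ν))
    (hq : ∀ᵐ z ∂μ.prod ν, q z.1 z.2 ∈ Icc ε M) (hρ₀ : ∫ x, ρ₀ x ∂μ ≠ 0) :
    0 < ∫ y, φ₁ y ∂ν := by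
  refine (integral_nonneg_of_ae h.φ₁_nonneg).lt_of_ne fun hI => ?_
  obtain ⟨x, hx, hφx⟩ :=
    ((h.frequently_φ₀_ne_zero hρ₀).and_eventually (h.ae_φ₀_mem_Icc hε hqm hq hρ₀)).exists
  rw [← hI, mul_zero, mul_zero, Icc_self, mem_singleton_iff] at hφx
  exact hx hφx

lemma ae_φ₀_pos (hε : 0 < ε)
    (hqm : AEStronglyMeasurable (fun z : α × β => q z.1 z.2) (μ.prod ν))
    (hq : ∀ᵐ z ∂μ.prod ν, q z.1 z.2 ∈ Icc ε M) (hρ₀ : ∫ x, ρ₀ x ∂μ ≠ 0) :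
    ∀ᵐ x ∂μ, 0 < φ₀ x :=
  (h.ae_φ₀_mem_Icc hε hqm hq hρ₀).mono fun _ hx =>
    (mul_pos hε (h.integral_φ₁_pos hε hqm hq hρ₀)).trans_le hx.1

lemma exists_abs_log_sub_log_le (h' : SchroedingerSystem μ ν q ρ₀ ρ₁ φ₀' ψ₀' φ₁' ψ₁')
    (hε : 0 < ε) (hqm : AEStronglyMeasurable (fun z : α × β => q z.1 z.2) (μ.prod ν))
    (hq : ∀ᵐ z ∂μ.prod ν, q z.1 z.2 ∈ Icc ε M) (hρ₀ : ∫ x, ρ₀ x ∂μ ≠ 0) :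
    ∃ C, ∀ᵐ x ∂μ, |log (φ₀ x) - log (φ₀' x)| ≤ C := by
  have hI := mul_pos hε (h.integral_φ₁_pos hε hqm hq hρ₀)
  have hI' := mul_pos hε (h'.integral_φ₁_pos hε hqm hq hρ₀)
  exact ⟨_, (h.ae_φ₀_mem_Icc hε hqm hq hρ₀).mp <| (h'.ae_φ₀_mem_Icc hε hqm hq hρ₀).mono
    fun x hx' hx => (abs_sub _ _).trans
      (add_le_add (abs_log_le_of_mem_Icc hI hx) (abs_log_le_of_mem_Icc hI' hx'))⟩

variable [SFinite μ]

theorem schroedingerCoupling_ae_eq (h' : SchroedingerSystem μ ν q ρ₀ ρ₁ φ₀' ψ₀' φ₁' ψ₁')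
    (hε : 0 < ε) (hqm : AEStronglyMeasurable (fun z : α × β => q z.1 z.2) (μ.prod ν))
    (hq : ∀ᵐ z ∂μ.prod ν, q z.1 z.2 ∈ Icc ε M) (hρ₀ : ∫ x, ρ₀ x ∂μ ≠ 0)
    (hρ₁ : ∫ y, ρ₁ y ∂ν ≠ 0) :
    schroedingerCoupling q ψ₀' φ₁' =ᵐ[μ.prod ν] schroedingerCoupling q ψ₀ φ₁ := by
  have hqmT : AEStronglyMeasurable (fun w : β × α => q w.2 w.1) (ν.prod μ) := hqm.prod_swap
  have hqT : ∀ᵐ w ∂ν.prod μ, q w.2 w.1 ∈ Icc ε M := ae_prod_swap hq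
  obtain ⟨C, hC⟩ := h.exists_abs_log_sub_log_le h' hε hqm hq hρ₀
  obtain ⟨D, hD⟩ := h.symm.exists_abs_log_sub_log_le h'.symm hε hqmT hqT hρ₁
  refine ae_eq_of_marginals_eq_of_ae_eq_exp_mul
    (integrable_schroedingerCoupling hqm
      (hq.mono fun z hz => abs_le.2 ⟨by linarith [hz.1, hz.2], hz.2⟩)
      (h.symm.integrable_φ₁ hε hqT hρ₁) (h.integrable_φ₁ hε hq hρ₀))
    (schroedingerCoupling_nonneg (hq.mono fun z hz => hε.le.trans hz.1) h.ψ₀_nonneg h.φ₁_nonneg)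
    (h.aestronglyMeasurable_φ₀.aemeasurable.log.sub
      h'.aestronglyMeasurable_φ₀.aemeasurable.log).aestronglyMeasurable hC
    (h.aestronglyMeasurable_ψ₁.aemeasurable.log.sub
      h'.aestronglyMeasurable_ψ₁.aemeasurable.log).aestronglyMeasurable hD
    (schroedingerCoupling_ae_eq_exp_mul
      (h.ψ₀_ae_eq_exp_mul h' (h.ae_φ₀_pos hε hqm hq hρ₀) (h'.ae_φ₀_pos hε hqm hq hρ₀))
      (h.symm.ψ₀_ae_eq_exp_mul h'.symm (h.symm.ae_φ₀_pos hε hqmT hqT hρ₁)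
        (h'.symm.ae_φ₀_pos hε hqmT hqT hρ₁))) ?_ ?_
  · filter_upwards [h.integral_schroedingerCoupling_fst, h'.integral_schroedingerCoupling_fst]
      with x hx hx' using hx'.trans hx.symm
  · filter_upwards [h.integral_schroedingerCoupling_snd, h'.integral_schroedingerCoupling_snd]
      with y hy hy' using hy'.trans hy.symm

theorem exists_eq_smul (h' : SchroedingerSystem μ ν q ρ₀ ρ₁ φ₀' ψ₀' φ₁' ψ₁') (hε : 0 < ε)
    (hqm : AEStronglyMeasurable (fun z : α × β => q z.1 z.2) (μ.prod ν))
    (hq : ∀ᵐ z ∂μ.prod ν, q z.1 z.2 ∈ Icc ε M) (hρ₀ : ∫ x, ρ₀ x ∂μ ≠ 0)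
    (hρ₁ : ∫ y, ρ₁ y ∂ν ≠ 0) :
    ∃ c : ℝ, 0 < c ∧ φ₀' =ᵐ[μ] c • φ₀ ∧ ψ₀' =ᵐ[μ] c⁻¹ • ψ₀ ∧
      φ₁' =ᵐ[ν] c • φ₁ ∧ ψ₁' =ᵐ[ν] c⁻¹ • ψ₁ := by
  have hqmT : AEStronglyMeasurable (fun w : β × α => q w.2 w.1) (ν.prod μ) := hqm.prod_swap
  have hqT : ∀ᵐ w ∂ν.prod μ, q w.2 w.1 ∈ Icc ε M := ae_prod_swap hq
  have htensor : ∀ᵐ z ∂μ.prod ν, ψ₀' z.1 * φ₁' z.2 = ψ₀ z.1 * φ₁ z.2 := by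
    filter_upwards [h.schroedingerCoupling_ae_eq h' hε hqm hq hρ₀ hρ₁, hq] with z hz hqz
    exact mul_left_cancel₀ (hε.trans_le hqz.1).ne' hz
  obtain ⟨c, hc, hψ₀, hφ₁⟩ := exists_ae_eq_smul_of_ae_mul_eq htensor
    (h.symm.integral_φ₁_pos hε hqmT hqT hρ₁) (h'.symm.integral_φ₁_pos hε hqmT hqT hρ₁)
    (h.integral_φ₁_pos hε hqm hq hρ₀).ne'
  exact ⟨c, hc, h.φ₀_ae_eq_smul h' hφ₁, hψ₀, hφ₁, h.symm.φ₀_ae_eq_smul h'.symm hψ₀⟩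

end SchroedingerSystem

theorem schroedinger_system_unique_general (n : ℕ)
    (S₀ S₁ : Set (EuclideanSpace ℝ (Fin n)))
    (hS₀ : IsCompact S₀) (hS₁ : IsCompact S₁)
    (ρ₀ ρ₁ : EuclideanSpace ℝ (Fin n) → ℝ)
    (hρ₀int : ∫ x in S₀, ρ₀ x = 1) (hρ₁int : ∫ x in S₁, ρ₁ x = 1)
    (q : EuclideanSpace ℝ (Fin n) → EuclideanSpace ℝ (Fin n) → ℝ)
    (hqc : ContinuousOn (fun p : EuclideanSpace ℝ (Fin n) × EuclideanSpace ℝ (Fin n) =>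
      q p.1 p.2) (S₀ ×ˢ S₁))
    (hqpos : ∀ x ∈ S₀, ∀ y ∈ S₁, 0 < q x y)
    -- first quadruple (ψ stands for φ̂)
    (φ₀ ψ₀ φ₁ ψ₁ : EuclideanSpace ℝ (Fin n) → ℝ)
    (hm : Measurable φ₀ ∧ Measurable ψ₀ ∧ Measurable φ₁ ∧ Measurable ψ₁)
    (hnn : (∀ x ∈ S₀, 0 ≤ φ₀ x ∧ 0 ≤ ψ₀ x) ∧ (∀ x ∈ S₁, 0 ≤ φ₁ x ∧ 0 ≤ ψ₁ x))
    (heq1 : ∀ x ∈ S₀, φ₀ x = ∫ y in S₁, q x y * φ₁ y)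
    (heq2 : ∀ x ∈ S₁, ψ₁ x = ∫ y in S₀, q y x * ψ₀ y)
    (heq3 : ∀ᵐ x ∂(volume.restrict S₀), ρ₀ x = φ₀ x * ψ₀ x)
    (heq4 : ∀ᵐ x ∂(volume.restrict S₁), ρ₁ x = φ₁ x * ψ₁ x)
    -- second quadruple
    (φ₀' ψ₀' φ₁' ψ₁' : EuclideanSpace ℝ (Fin n) → ℝ)
    (hm' : Measurable φ₀' ∧ Measurable ψ₀' ∧ Measurable φ₁' ∧ Measurable ψ₁')
    (hnn' : (∀ x ∈ S₀, 0 ≤ φ₀' x ∧ 0 ≤ ψ₀' x) ∧ (∀ x ∈ S₁, 0 ≤ φ₁' x ∧ 0 ≤ ψ₁' x))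
    (heq1' : ∀ x ∈ S₀, φ₀' x = ∫ y in S₁, q x y * φ₁' y)
    (heq2' : ∀ x ∈ S₁, ψ₁' x = ∫ y in S₀, q y x * ψ₀' y)
    (heq3' : ∀ᵐ x ∂(volume.restrict S₀), ρ₀ x = φ₀' x * ψ₀' x)
    (heq4' : ∀ᵐ x ∂(volume.restrict S₁), ρ₁ x = φ₁' x * ψ₁' x) :
    ∃ c : ℝ, 0 < c ∧
      (∀ᵐ x ∂(volume.restrict S₀), 0 < ρ₀ x →
        φ₀' x = c * φ₀ x ∧ ψ₀' x = c⁻¹ * ψ₀ x) ∧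
      (∀ᵐ x ∂(volume.restrict S₁), 0 < ρ₁ x →
        φ₁' x = c * φ₁ x ∧ ψ₁' x = c⁻¹ * ψ₁ x) := by
  have hS₀m := hS₀.isClosed.measurableSet
  have hS₁m := hS₁.isClosed.measurableSet
  have hne {S : Set (EuclideanSpace ℝ (Fin n))} {ρ : EuclideanSpace ℝ (Fin n) → ℝ}
      (h : ∫ x in S, ρ x = 1) : S.Nonempty :=
    nonempty_iff_ne_empty.2 fun hS => by simp [hS] at h
  obtain ⟨ε, M, hε, hqb⟩ := (hS₀.prod hS₁).exists_forall_mem_Icc_of_pos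
    ((hne hρ₀int).prod (hne hρ₁int)) hqc fun z hz => hqpos z.1 hz.1 z.2 hz.2
  have hq : ∀ᵐ z ∂(volume.restrict S₀).prod (volume.restrict S₁), q z.1 z.2 ∈ Icc ε M := by
    rw [Measure.prod_restrict]
    exact ae_restrict_of_forall_mem (hS₀m.prod hS₁m) hqb
  have hqm : AEStronglyMeasurable (fun z => q z.1 z.2)
      ((volume.restrict S₀).prod (volume.restrict S₁)) := by
    rw [Measure.prod_restrict]
    exact hqc.aestronglyMeasurable (hS₀m.prod hS₁m)
  obtain ⟨hφ₀m, hψ₀m, hφ₁m, hψ₁m⟩ := hm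
  obtain ⟨hφ₀m', hψ₀m', hφ₁m', hψ₁m'⟩ := hm'
  have h := SchroedingerSystem.of_restrict hS₀m hS₁m hφ₀m hψ₀m hφ₁m hψ₁m
    (fun x hx => (hnn.1 x hx).2) (fun y hy => (hnn.2 y hy).1) heq1 heq2 heq3 heq4
  have h' := SchroedingerSystem.of_restrict hS₀m hS₁m hφ₀m' hψ₀m' hφ₁m' hψ₁m'
    (fun x hx => (hnn'.1 x hx).2) (fun y hy => (hnn'.2 y hy).1) heq1' heq2' heq3' heq4'
  obtain ⟨c, hc, hφ₀, hψ₀, hφ₁, hψ₁⟩ := h.exists_eq_smul h' hε hqm hq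
    (hρ₀int ▸ one_ne_zero) (hρ₁int ▸ one_ne_zero)
  refine ⟨c, hc, ?_, ?_⟩
  · filter_upwards [hφ₀, hψ₀] with x hx hx' _ using ⟨hx, hx'⟩
  · filter_upwards [hφ₁, hψ₁] with y hy hy' _ using ⟨hy, hy'⟩

/-- uniqueness, up to a multiplicative constant, of solutions of the
Schrödinger system on compact supports. -/
theorem schroedinger_system_unique (n : ℕ)
    (S₀ S₁ : Set (EuclideanSpace ℝ (Fin n)))
    (hS₀ : IsCompact S₀) (hS₁ : IsCompact S₁)
    (ρ₀ ρ₁ : EuclideanSpace ℝ (Fin n) → ℝ)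
    (hρ₀m : Measurable ρ₀) (hρ₁m : Measurable ρ₁)
    (hρ₀nn : ∀ x ∈ S₀, 0 ≤ ρ₀ x) (hρ₁nn : ∀ x ∈ S₁, 0 ≤ ρ₁ x)
    (hρ₀int : ∫ x in S₀, ρ₀ x = 1) (hρ₁int : ∫ x in S₁, ρ₁ x = 1)
    (q : EuclideanSpace ℝ (Fin n) → EuclideanSpace ℝ (Fin n) → ℝ)
    (hqc : ContinuousOn (fun p : EuclideanSpace ℝ (Fin n) × EuclideanSpace ℝ (Fin n) =>
      q p.1 p.2) (S₀ ×ˢ S₁))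
    (hqpos : ∀ x ∈ S₀, ∀ y ∈ S₁, 0 < q x y)
    -- first quadruple (ψ stands for φ̂)
    (φ₀ ψ₀ φ₁ ψ₁ : EuclideanSpace ℝ (Fin n) → ℝ)
    (hm : Measurable φ₀ ∧ Measurable ψ₀ ∧ Measurable φ₁ ∧ Measurable ψ₁)
    (hnn : (∀ x ∈ S₀, 0 ≤ φ₀ x ∧ 0 ≤ ψ₀ x) ∧ (∀ x ∈ S₁, 0 ≤ φ₁ x ∧ 0 ≤ ψ₁ x))
    (heq1 : ∀ x ∈ S₀, φ₀ x = ∫ y in S₁, q x y * φ₁ y)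
    (heq2 : ∀ x ∈ S₁, ψ₁ x = ∫ y in S₀, q y x * ψ₀ y)
    (heq3 : ∀ᵐ x ∂(volume.restrict S₀), ρ₀ x = φ₀ x * ψ₀ x)
    (heq4 : ∀ᵐ x ∂(volume.restrict S₁), ρ₁ x = φ₁ x * ψ₁ x)
    -- second quadruple
    (φ₀' ψ₀' φ₁' ψ₁' : EuclideanSpace ℝ (Fin n) → ℝ)
    (hm' : Measurable φ₀' ∧ Measurable ψ₀' ∧ Measurable φ₁' ∧ Measurable ψ₁')
    (hnn' : (∀ x ∈ S₀, 0 ≤ φ₀' x ∧ 0 ≤ ψ₀' x) ∧ (∀ x ∈ S₁, 0 ≤ φ₁' x ∧ 0 ≤ ψ₁' x))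
    (heq1' : ∀ x ∈ S₀, φ₀' x = ∫ y in S₁, q x y * φ₁' y)
    (heq2' : ∀ x ∈ S₁, ψ₁' x = ∫ y in S₀, q y x * ψ₀' y)
    (heq3' : ∀ᵐ x ∂(volume.restrict S₀), ρ₀ x = φ₀' x * ψ₀' x)
    (heq4' : ∀ᵐ x ∂(volume.restrict S₁), ρ₁ x = φ₁' x * ψ₁' x) :
    ∃ c : ℝ, 0 < c ∧
      (∀ᵐ x ∂(volume.restrict S₀), 0 < ρ₀ x →
        φ₀' x = c * φ₀ x ∧ ψ₀' x = c⁻¹ * ψ₀ x) ∧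
      (∀ᵐ x ∂(volume.restrict S₁), 0 < ρ₁ x →
        φ₁' x = c * φ₁ x ∧ ψ₁' x = c⁻¹ * ψ₁ x) :=
  schroedinger_system_unique_general n S₀ S₁ hS₀ hS₁ ρ₀ ρ₁ hρ₀int hρ₁int q hqc hqpos φ₀ ψ₀ φ₁ ψ₁ hm
    hnn heq1 heq2 heq3 heq4 φ₀' ψ₀' φ₁' ψ₁' hm' hnn' heq1' heq2' heq3' heq4'
end

section
/- Let S ⊆ ℝⁿ be a Borel set of finite positive Lebesgue measure and let f, g ∈ L∞₊(S) satisfy ∫_S f(x)² dx = ∫_S g(x)² dx = 1. Then m(f,g) ≤ 1 ≤ M(f,g) and ‖f − g‖_{L²(S)} ≤ M(f,g) − m(f,g) ≤ exp(d_H(f,g)) − 1. -/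
open MeasureTheory

noncomputable section

/-- `L∞₊(S)`: measurable real functions bounded below and above by positive
constants a.e. on `S` (w.r.t. Lebesgue measure restricted to `S`). -/
def MemLinfPos {α : Type*} [MeasurableSpace α] (μ : Measure α) (f : α → ℝ) : Prop :=
  Measurable f ∧ ∃ c K : ℝ, 0 < c ∧ c ≤ K ∧ ∀ᵐ x ∂μ, c ≤ f x ∧ f x ≤ K

/-- `M(f,g) = essSup (f/g)`. -/
def Mratio {α : Type*} [MeasurableSpace α] (μ : Measure α) (f g : α → ℝ) : ℝ :=
  essSup (fun x => f x / g x) μ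

/-- `m(f,g) = essInf (f/g)`. -/
def mratio {α : Type*} [MeasurableSpace α] (μ : Measure α) (f g : α → ℝ) : ℝ :=
  essInf (fun x => f x / g x) μ

/-- Hilbert projective metric `d_H(f,g) = log (M(f,g)/m(f,g))`. -/
def hilbertDist {α : Type*} [MeasurableSpace α] (μ : Measure α) (f g : α → ℝ) : ℝ :=
  Real.log (Mratio μ f g / mratio μ f g)

/-!
Almost everywhere `m g ≤ f ≤ M g` with `g > 0`. Squaring and integrating against the
normalisations `∫ f² = ∫ g² = 1` gives `m² ≤ 1 ≤ M²`, hence `m ≤ 1 ≤ M`. Consequently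
`(m - 1) g ≤ f - g ≤ (M - 1) g` bounds `|f - g|` by `(M - m) g`, and integrating the square gives
`‖f - g‖₂ ≤ M - m`. Finally `M / m - 1 - (M - m) = (1 - m)(M - m) / m ≥ 0`.
-/

open Filter

namespace MemLinfPos

variable {α : Type*} [MeasurableSpace α] {μ : Measure α} {f g : α → ℝ}

lemma ae_pos (hf : MemLinfPos μ f) : ∀ᵐ x ∂μ, 0 < f x := by
  obtain ⟨-, c, _, hc, -, hb⟩ := hf
  filter_upwards [hb] with x hx using hc.trans_le hx.1

lemma div (hf : MemLinfPos μ f) (hg : MemLinfPos μ g) :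
    MemLinfPos μ (fun x => f x / g x) := by
  obtain ⟨hfm, cf, Kf, hcf, hcKf, hfb⟩ := hf
  obtain ⟨hgm, cg, Kg, hcg, hcKg, hgb⟩ := hg
  refine ⟨hfm.div hgm, cf / Kg, Kf / cg, div_pos hcf (hcg.trans_le hcKg),
    div_le_div₀ (hcf.le.trans hcKf) hcKf hcg hcKg, ?_⟩
  filter_upwards [hfb, hgb] with x hfx hgx
  exact ⟨div_le_div₀ (hcf.le.trans hfx.1) hfx.1 (hcg.trans_le hgx.1) hgx.2,
    div_le_div₀ (hcf.le.trans hcKf) hfx.2 hcg hgx.1⟩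

lemma isBoundedUnder_le (hf : MemLinfPos μ f) : IsBoundedUnder (· ≤ ·) (ae μ) f := by
  obtain ⟨-, _, K, -, -, hb⟩ := hf
  exact ⟨K, eventually_map.2 (hb.mono fun _ hx => hx.2)⟩

lemma isBoundedUnder_ge (hf : MemLinfPos μ f) : IsBoundedUnder (· ≥ ·) (ae μ) f := by
  obtain ⟨-, c, _, -, -, hb⟩ := hf
  exact ⟨c, eventually_map.2 (hb.mono fun _ hx => hx.1)⟩

lemma ae_le_essSup (hf : MemLinfPos μ f) : ∀ᵐ x ∂μ, f x ≤ essSup f μ :=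
  _root_.ae_le_essSup hf.isBoundedUnder_le

lemma ae_essInf_le (hf : MemLinfPos μ f) : ∀ᵐ x ∂μ, essInf f μ ≤ f x :=
  _root_.ae_essInf_le hf.isBoundedUnder_ge

lemma essInf_pos [NeZero μ] (hf : MemLinfPos μ f) : 0 < essInf f μ := by
  have hcobdd := hf.isBoundedUnder_le.isCoboundedUnder_ge
  obtain ⟨-, c, _, hc, -, hb⟩ := hf
  exact hc.trans_le <| le_essInf_of_ae_le c (hb.mono fun _ hx => hx.1) hcobdd

lemma essInf_le_essSup [NeZero μ] (hf : MemLinfPos μ f) : essInf f μ ≤ essSup f μ := by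
  obtain ⟨x, hinf, hsup⟩ := (hf.ae_essInf_le.and hf.ae_le_essSup).exists
  exact hinf.trans hsup

end MemLinfPos

section Ratio

variable {α : Type*} [MeasurableSpace α] {μ : Measure α} {f g : α → ℝ}

lemma ae_mratio_mul_le (hf : MemLinfPos μ f) (hg : MemLinfPos μ g) :
    ∀ᵐ x ∂μ, mratio μ f g * g x ≤ f x := by
  filter_upwards [(hf.div hg).ae_essInf_le, hg.ae_pos] with x hx hgx
  exact (le_div_iff₀ hgx).1 hx

lemma ae_le_Mratio_mul (hf : MemLinfPos μ f) (hg : MemLinfPos μ g) :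
    ∀ᵐ x ∂μ, f x ≤ Mratio μ f g * g x := by
  filter_upwards [(hf.div hg).ae_le_essSup, hg.ae_pos] with x hx hgx
  exact (div_le_iff₀ hgx).1 hx

lemma mratio_pos [NeZero μ] (hf : MemLinfPos μ f) (hg : MemLinfPos μ g) :
    0 < mratio μ f g :=
  (hf.div hg).essInf_pos

lemma mratio_le_Mratio [NeZero μ] (hf : MemLinfPos μ f) (hg : MemLinfPos μ g) :
    mratio μ f g ≤ Mratio μ f g :=
  (hf.div hg).essInf_le_essSup

lemma integral_sq_le_of_ae_abs_le {u v : α → ℝ} (hv : Integrable (fun x => v x ^ 2) μ)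
    (huv : ∀ᵐ x ∂μ, |u x| ≤ v x) : ∫ x, u x ^ 2 ∂μ ≤ ∫ x, v x ^ 2 ∂μ := by
  refine integral_mono_of_nonneg (ae_of_all _ fun _ => sq_nonneg _) hv ?_
  filter_upwards [huv] with x hx
  simpa only [sq_abs] using pow_le_pow_left₀ (abs_nonneg _) hx 2

lemma integral_const_mul_sq (hg : ∫ x, g x ^ 2 ∂μ = 1) (c : ℝ) :
    ∫ x, (c * g x) ^ 2 ∂μ = c ^ 2 := by
  simp only [mul_pow, integral_const_mul, hg, mul_one]

lemma integrable_const_mul_sq (hg : ∫ x, g x ^ 2 ∂μ = 1) (c : ℝ) :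
    Integrable (fun x => (c * g x) ^ 2) μ := by
  simpa only [mul_pow] using (integrable_of_integral_eq_one hg).const_mul (c ^ 2)

variable [NeZero μ] (hf : MemLinfPos μ f) (hg : MemLinfPos μ g)
  (hfnorm : ∫ x, f x ^ 2 ∂μ = 1) (hgnorm : ∫ x, g x ^ 2 ∂μ = 1)
include hf hg hfnorm hgnorm

lemma mratio_le_one : mratio μ f g ≤ 1 := by
  have hm := mratio_pos hf hg
  have key : ∫ x, (mratio μ f g * g x) ^ 2 ∂μ ≤ ∫ x, f x ^ 2 ∂μ := by
    refine integral_sq_le_of_ae_abs_le (integrable_of_integral_eq_one hfnorm) ?_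
    filter_upwards [ae_mratio_mul_le hf hg, hg.ae_pos] with x hx hgx
    rwa [abs_of_pos (mul_pos hm hgx)]
  rw [integral_const_mul_sq hgnorm, hfnorm] at key
  exact (sq_le_one_iff₀ hm.le).1 key

lemma one_le_Mratio : 1 ≤ Mratio μ f g := by
  have hM := (mratio_pos hf hg).trans_le (mratio_le_Mratio hf hg)
  have key : ∫ x, f x ^ 2 ∂μ ≤ ∫ x, (Mratio μ f g * g x) ^ 2 ∂μ := by
    refine integral_sq_le_of_ae_abs_le (integrable_const_mul_sq hgnorm _) ?_
    filter_upwards [ae_le_Mratio_mul hf hg, hf.ae_pos] with x hx hfx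
    rwa [abs_of_pos hfx]
  rw [integral_const_mul_sq hgnorm, hfnorm] at key
  exact (one_le_sq_iff₀ hM.le).1 key

lemma integral_sub_sq_le : ∫ x, (f x - g x) ^ 2 ∂μ ≤ (Mratio μ f g - mratio μ f g) ^ 2 := by
  have hm1 := mratio_le_one hf hg hfnorm hgnorm
  have hM1 := one_le_Mratio hf hg hfnorm hgnorm
  rw [← integral_const_mul_sq hgnorm]
  refine integral_sq_le_of_ae_abs_le (integrable_const_mul_sq hgnorm _) ?_
  filter_upwards [ae_mratio_mul_le hf hg, ae_le_Mratio_mul hf hg, hg.ae_pos]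
    with x hmx hMx hgx
  exact abs_le.2 ⟨by nlinarith, by nlinarith⟩

end Ratio

lemma sub_le_div_sub_one {M m : ℝ} (hm : 0 < m) (hm1 : m ≤ 1) (hmM : m ≤ M) :
    M - m ≤ M / m - 1 := by
  rw [div_sub_one hm.ne', le_div_iff₀ hm]
  nlinarith [mul_nonneg (sub_nonneg.2 hmM) (sub_nonneg.2 hm1)]

theorem L2_dist_le_hilbert_general (n : ℕ)
    (S : Set (EuclideanSpace ℝ (Fin n)))
    (f g : EuclideanSpace ℝ (Fin n) → ℝ)
    (hf : MemLinfPos (volume.restrict S) f) (hg : MemLinfPos (volume.restrict S) g)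
    (hfnorm : ∫ x in S, (f x) ^ 2 = 1) (hgnorm : ∫ x in S, (g x) ^ 2 = 1) :
    mratio (volume.restrict S) f g ≤ 1 ∧ 1 ≤ Mratio (volume.restrict S) f g ∧
    Real.sqrt (∫ x in S, (f x - g x) ^ 2) ≤
      Mratio (volume.restrict S) f g - mratio (volume.restrict S) f g ∧
    Mratio (volume.restrict S) f g - mratio (volume.restrict S) f g ≤
      Real.exp (hilbertDist (volume.restrict S) f g) - 1 := by
  have : NeZero (volume.restrict S) := ⟨fun h => by simp [h] at hfnorm⟩
  have hm := mratio_pos hf hg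
  have hm1 := mratio_le_one hf hg hfnorm hgnorm
  have hM1 := one_le_Mratio hf hg hfnorm hgnorm
  refine ⟨hm1, hM1, ?_, ?_⟩
  · exact (Real.sqrt_le_sqrt (integral_sub_sq_le hf hg hfnorm hgnorm)).trans_eq
      (Real.sqrt_sq (by linarith))
  · rw [hilbertDist, Real.exp_log (div_pos (by linarith) hm)]
    exact sub_le_div_sub_one hm hm1 (hm1.trans hM1)

/-- for `L²`-normalized `f, g ∈ L∞₊(S)` one has
`m(f,g) ≤ 1 ≤ M(f,g)` and `‖f-g‖₂ ≤ M(f,g) - m(f,g) ≤ exp(d_H(f,g)) - 1`. -/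
theorem L2_dist_le_hilbert (n : ℕ)
    (S : Set (EuclideanSpace ℝ (Fin n))) (hSm : MeasurableSet S)
    (hSpos : 0 < volume S) (hSfin : volume S < ⊤)
    (f g : EuclideanSpace ℝ (Fin n) → ℝ)
    (hf : MemLinfPos (volume.restrict S) f) (hg : MemLinfPos (volume.restrict S) g)
    (hfnorm : ∫ x in S, (f x) ^ 2 = 1) (hgnorm : ∫ x in S, (g x) ^ 2 = 1) :
    mratio (volume.restrict S) f g ≤ 1 ∧ 1 ≤ Mratio (volume.restrict S) f g ∧
    Real.sqrt (∫ x in S, (f x - g x) ^ 2) ≤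
      Mratio (volume.restrict S) f g - mratio (volume.restrict S) f g ∧
    Mratio (volume.restrict S) f g - mratio (volume.restrict S) f g ≤
      Real.exp (hilbertDist (volume.restrict S) f g) - 1 :=
  L2_dist_le_hilbert_general n S f g hf hg hfnorm hgnorm
end
end

section
/- Let S₀, S₁ ⊆ ℝⁿ be compact sets with S₁ of positive Lebesgue measure |S₁|, let q : S₀ × S₁ → ℝ be continuous with q ≥ α > 0, and let h : S₀ → [0, ∞) be integrable with ∫_{S₀} h > 0. Define ψ(x) = ∫_{S₀} q(y,x) h(y) dy for x ∈ S₁ and g = ψ / ‖ψ‖_{L²(S₁)}. Then for all x₁, x₂ ∈ S₁, |g(x₁) − g(x₂)| ≤ (α √|S₁|)^{-1} · sup_{y ∈ S₀} |q(y,x₁) − q(y,x₂)|. In particular, the family of all such normalized functions g (over all admissible h) is uniformly equicontinuous on S₁. -/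
open MeasureTheory

noncomputable section

/-- The `L²(S₁)`-normalization of `ψ(x) = ∫_{S₀} q(y,x) h(y) dy`. -/
def normg {n : ℕ} (S₀ S₁ : Set (EuclideanSpace ℝ (Fin n)))
    (q : EuclideanSpace ℝ (Fin n) → EuclideanSpace ℝ (Fin n) → ℝ)
    (h : EuclideanSpace ℝ (Fin n) → ℝ) (x : EuclideanSpace ℝ (Fin n)) : ℝ :=
  (∫ y in S₀, q y x * h y) /
    Real.sqrt (∫ z in S₁, (∫ y in S₀, q y z * h y) ^ 2)

/-!
Write `ψ = ∫_{S₀} q(y, ·) h(y) dy` and `I = ∫_{S₀} h`. Since `h ≥ 0`, the difference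
`ψ(x₁) - ψ(x₂)` is at most `C I` when `|q(·, x₁) - q(·, x₂)| ≤ C` on `S₀`, while `q ≥ α` gives
`ψ ≥ α I` on `S₁` and hence `‖ψ‖_{L²(S₁)} ≥ α √|S₁| I`. The factor `I` cancels in the quotient,
which is why the bound is uniform in `h`; uniform continuity of `q` on the compact set
`S₀ × S₁` then gives equicontinuity.
-/

def l2Normalize {Y : Type*} [MeasurableSpace Y] (ν : Measure Y) (s : Set Y) (f : Y → ℝ)
    (x : Y) : ℝ :=
  f x / Real.sqrt (∫ z in s, f z ^ 2 ∂ν)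

theorem mul_sqrt_measureReal_le_sqrt_setIntegral_sq {Y : Type*} [MeasurableSpace Y]
    {ν : Measure Y} {s : Set Y} {f : Y → ℝ} {c : ℝ} (hs : MeasurableSet s) (hνs : ν s ≠ ⊤)
    (hc : 0 ≤ c) (hcf : ∀ z ∈ s, c ≤ f z) (hf : IntegrableOn (fun z => f z ^ 2) s ν) :
    c * Real.sqrt (ν.real s) ≤ Real.sqrt (∫ z in s, f z ^ 2 ∂ν) := by
  rw [← Real.sqrt_sq hc, ← Real.sqrt_mul (sq_nonneg c)]
  exact Real.sqrt_le_sqrt <| setIntegral_ge_of_const_le_real hs hνs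
    (fun z hz => pow_le_pow_left₀ hc (hcf z hz) 2) hf

section Kernel

variable {X Y : Type*} [MetricSpace X] [MetricSpace Y] {S₀ : Set X} {S₁ : Set Y}
  {q : X → Y → ℝ}

theorem ContinuousOn.exists_pos_forall_dist_lt_abs_sub_lt (hS₀ : IsCompact S₀)
    (hS₁ : IsCompact S₁) (hq : ContinuousOn (fun p : X × Y => q p.1 p.2) (S₀ ×ˢ S₁))
    {ε : ℝ} (hε : 0 < ε) :
    ∃ δ > 0, ∀ x₁ ∈ S₁, ∀ x₂ ∈ S₁, dist x₁ x₂ < δ → ∀ y ∈ S₀, |q y x₁ - q y x₂| < ε := by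
  obtain ⟨δ, hδ, hq_unif⟩ :=
    Metric.uniformContinuousOn_iff.1 ((hS₀.prod hS₁).uniformContinuousOn_of_continuous hq) ε hε
  refine ⟨δ, hδ, fun x₁ hx₁ x₂ hx₂ hx y hy => ?_⟩
  have hdist : dist (y, x₁) (y, x₂) < δ := by
    rwa [Prod.dist_eq, dist_self, max_eq_right dist_nonneg]
  simpa only [Real.dist_eq] using hq_unif (y, x₁) ⟨hy, hx₁⟩ (y, x₂) ⟨hy, hx₂⟩ hdist

variable [MeasurableSpace X] [OpensMeasurableSpace X] {μ : Measure X} {h : X → ℝ}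

def kernelIntegral (μ : Measure X) (S₀ : Set X) (q : X → Y → ℝ) (h : X → ℝ) (x : Y) : ℝ :=
  ∫ y in S₀, q y x * h y ∂μ

theorem integrableOn_kernel_mul (hS₀ : IsCompact S₀)
    (hq : ContinuousOn (fun p : X × Y => q p.1 p.2) (S₀ ×ˢ S₁)) (hh : IntegrableOn h S₀ μ)
    {x : Y} (hx : x ∈ S₁) : IntegrableOn (fun y => q y x * h y) S₀ μ :=
  hh.continuousOn_mul (ContinuousOn.uncurry_right x hx hq) hS₀

theorem abs_kernelIntegral_sub_le (hS₀ : IsCompact S₀)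
    (hq : ContinuousOn (fun p : X × Y => q p.1 p.2) (S₀ ×ˢ S₁)) (hh : IntegrableOn h S₀ μ)
    (hh₀ : ∀ y ∈ S₀, 0 ≤ h y) {x₁ x₂ : Y} (hx₁ : x₁ ∈ S₁) (hx₂ : x₂ ∈ S₁) {C : ℝ}
    (hC : ∀ y ∈ S₀, |q y x₁ - q y x₂| ≤ C) :
    |kernelIntegral μ S₀ q h x₁ - kernelIntegral μ S₀ q h x₂| ≤ C * ∫ y in S₀, h y ∂μ := by
  rw [kernelIntegral, kernelIntegral, ← integral_sub (integrableOn_kernel_mul hS₀ hq hh hx₁)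
    (integrableOn_kernel_mul hS₀ hq hh hx₂), ← integral_const_mul, ← Real.norm_eq_abs]
  refine norm_integral_le_of_norm_le (hh.const_mul C)
    (ae_restrict_of_forall_mem hS₀.measurableSet fun y hy => ?_)
  rw [← sub_mul, Real.norm_eq_abs, abs_mul, abs_of_nonneg (hh₀ y hy)]
  exact mul_le_mul_of_nonneg_right (hC y hy) (hh₀ y hy)

theorem continuousOn_kernelIntegral (hS₀ : IsCompact S₀) (hS₁ : IsCompact S₁)
    (hq : ContinuousOn (fun p : X × Y => q p.1 p.2) (S₀ ×ˢ S₁)) (hh : IntegrableOn h S₀ μ)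
    (hh₀ : ∀ y ∈ S₀, 0 ≤ h y) : ContinuousOn (kernelIntegral μ S₀ q h) S₁ := by
  set I := ∫ y in S₀, h y ∂μ
  have hI : 0 ≤ I := setIntegral_nonneg hS₀.measurableSet hh₀
  refine Metric.continuousOn_iff.2 fun x₂ hx₂ ε hε => ?_
  obtain ⟨δ, hδ, hqδ⟩ :=
    hq.exists_pos_forall_dist_lt_abs_sub_lt hS₀ hS₁ (ε := ε / (I + 1)) (by positivity)
  refine ⟨δ, hδ, fun x₁ hx₁ hx => ?_⟩
  calc dist (kernelIntegral μ S₀ q h x₁) (kernelIntegral μ S₀ q h x₂)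
      ≤ ε / (I + 1) * I := abs_kernelIntegral_sub_le hS₀ hq hh hh₀ hx₁ hx₂
        fun y hy => (hqδ x₁ hx₁ x₂ hx₂ hx y hy).le
    _ < ε := by
      rw [div_mul_eq_mul_div, div_lt_iff₀ (by positivity)]
      linarith

theorem mul_setIntegral_le_kernelIntegral (hS₀ : IsCompact S₀)
    (hq : ContinuousOn (fun p : X × Y => q p.1 p.2) (S₀ ×ˢ S₁)) (hh : IntegrableOn h S₀ μ)
    (hh₀ : ∀ y ∈ S₀, 0 ≤ h y) {α : ℝ} (hqα : ∀ y ∈ S₀, ∀ x ∈ S₁, α ≤ q y x) {x : Y}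
    (hx : x ∈ S₁) : α * ∫ y in S₀, h y ∂μ ≤ kernelIntegral μ S₀ q h x := by
  rw [← integral_const_mul]
  exact setIntegral_mono_on (hh.const_mul α) (integrableOn_kernel_mul hS₀ hq hh hx)
    hS₀.measurableSet fun y hy => mul_le_mul_of_nonneg_right (hqα y hy x hx) (hh₀ y hy)

variable [MeasurableSpace Y] [OpensMeasurableSpace Y] {ν : Measure Y}
  [IsFiniteMeasureOnCompacts ν]

theorem abs_l2Normalize_kernelIntegral_sub_le (hS₀ : IsCompact S₀) (hS₁ : IsCompact S₁)
    (hS₁pos : 0 < ν S₁) (hq : ContinuousOn (fun p : X × Y => q p.1 p.2) (S₀ ×ˢ S₁))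
    {α : ℝ} (hα : 0 < α) (hqα : ∀ y ∈ S₀, ∀ x ∈ S₁, α ≤ q y x) (hh : IntegrableOn h S₀ μ)
    (hh₀ : ∀ y ∈ S₀, 0 ≤ h y) (hI : 0 < ∫ y in S₀, h y ∂μ) {x₁ x₂ : Y} (hx₁ : x₁ ∈ S₁)
    (hx₂ : x₂ ∈ S₁) {C : ℝ} (hC : ∀ y ∈ S₀, |q y x₁ - q y x₂| ≤ C) :
    |l2Normalize ν S₁ (kernelIntegral μ S₀ q h) x₁ -
        l2Normalize ν S₁ (kernelIntegral μ S₀ q h) x₂| ≤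
      (α * Real.sqrt (ν.real S₁))⁻¹ * C := by
  set ψ := kernelIntegral μ S₀ q h
  set I := ∫ y in S₀, h y ∂μ
  have hm : 0 < ν.real S₁ := ENNReal.toReal_pos hS₁pos.ne' hS₁.measure_lt_top.ne
  have hψ_sq : IntegrableOn (fun z => ψ z ^ 2) S₁ ν :=
    ((continuousOn_kernelIntegral hS₀ hS₁ hq hh hh₀).pow 2).integrableOn_compact hS₁
  have hnorm : α * I * Real.sqrt (ν.real S₁) ≤ Real.sqrt (∫ z in S₁, ψ z ^ 2 ∂ν) :=
    mul_sqrt_measureReal_le_sqrt_setIntegral_sq hS₁.measurableSet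
      hS₁.measure_lt_top.ne (by positivity)
      (fun z hz => mul_setIntegral_le_kernelIntegral hS₀ hq hh hh₀ hqα hz) hψ_sq
  have hdiff : |ψ x₁ - ψ x₂| ≤ C * I := abs_kernelIntegral_sub_le hS₀ hq hh hh₀ hx₁ hx₂ hC
  have hD : 0 < Real.sqrt (∫ z in S₁, ψ z ^ 2 ∂ν) := lt_of_lt_of_le (by positivity) hnorm
  rw [l2Normalize, l2Normalize, div_sub_div_same, abs_div, abs_of_pos hD]
  calc |ψ x₁ - ψ x₂| / Real.sqrt (∫ z in S₁, ψ z ^ 2 ∂ν)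
      ≤ C * I / (α * I * Real.sqrt (ν.real S₁)) :=
        div_le_div₀ ((abs_nonneg _).trans hdiff) hdiff (by positivity) hnorm
    _ = (α * Real.sqrt (ν.real S₁))⁻¹ * C := by field_simp

end Kernel

/-- a quantitative modulus-of-continuity bound for the normalized
functions `g = ψ/‖ψ‖₂`, and, as a consequence, uniform equicontinuity of the
family of all such `g` over all admissible `h`. -/
theorem normalized_iterates_equicontinuous (n : ℕ)
    (S₀ S₁ : Set (EuclideanSpace ℝ (Fin n)))
    (hS₀ : IsCompact S₀) (hS₁ : IsCompact S₁)
    (hS₁pos : 0 < volume S₁)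
    (q : EuclideanSpace ℝ (Fin n) → EuclideanSpace ℝ (Fin n) → ℝ)
    (hqc : ContinuousOn (fun p : EuclideanSpace ℝ (Fin n) × EuclideanSpace ℝ (Fin n) =>
      q p.1 p.2) (S₀ ×ˢ S₁))
    (α : ℝ) (hα : 0 < α)
    (hqα : ∀ y ∈ S₀, ∀ x ∈ S₁, α ≤ q y x) :
    (∀ h : EuclideanSpace ℝ (Fin n) → ℝ,
      IntegrableOn h S₀ → (∀ y, 0 ≤ h y) → 0 < ∫ y in S₀, h y →
      ∀ x₁ ∈ S₁, ∀ x₂ ∈ S₁,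
        |normg S₀ S₁ q h x₁ - normg S₀ S₁ q h x₂| ≤
          (α * Real.sqrt (volume S₁).toReal)⁻¹ *
            sSup ((fun y => |q y x₁ - q y x₂|) '' S₀)) ∧
    (∀ ε : ℝ, 0 < ε → ∃ δ : ℝ, 0 < δ ∧
      ∀ h : EuclideanSpace ℝ (Fin n) → ℝ,
        IntegrableOn h S₀ → (∀ y, 0 ≤ h y) → 0 < ∫ y in S₀, h y →
        ∀ x₁ ∈ S₁, ∀ x₂ ∈ S₁, dist x₁ x₂ < δ →
          |normg S₀ S₁ q h x₁ - normg S₀ S₁ q h x₂| < ε) := by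
  set K := α * Real.sqrt (volume S₁).toReal
  have hK : 0 < K := by
    have := ENNReal.toReal_pos hS₁pos.ne' hS₁.measure_lt_top.ne
    positivity
  have hbound : ∀ h, IntegrableOn h S₀ → (∀ y, 0 ≤ h y) → 0 < ∫ y in S₀, h y →
      ∀ x₁ ∈ S₁, ∀ x₂ ∈ S₁, ∀ C, (∀ y ∈ S₀, |q y x₁ - q y x₂| ≤ C) →
        |normg S₀ S₁ q h x₁ - normg S₀ S₁ q h x₂| ≤ K⁻¹ * C :=
    fun h hh hh₀ hI x₁ hx₁ x₂ hx₂ C hC => abs_l2Normalize_kernelIntegral_sub_le hS₀ hS₁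
      hS₁pos hqc hα hqα hh (fun y _ => hh₀ y) hI hx₁ hx₂ hC
  refine ⟨fun h hh hh₀ hI x₁ hx₁ x₂ hx₂ => hbound h hh hh₀ hI x₁ hx₁ x₂ hx₂ _ fun y hy => ?_,
    fun ε hε => ?_⟩
  · have hcont := ((ContinuousOn.uncurry_right x₁ hx₁ hqc).sub
      (ContinuousOn.uncurry_right x₂ hx₂ hqc)).abs
    exact le_csSup (hS₀.image_of_continuousOn hcont).bddAbove ⟨y, hy, rfl⟩
  · obtain ⟨δ, hδ, hqδ⟩ :=
      hqc.exists_pos_forall_dist_lt_abs_sub_lt hS₀ hS₁ (ε := K * ε / 2) (by positivity)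
    refine ⟨δ, hδ, fun h hh hh₀ hI x₁ hx₁ x₂ hx₂ hx => ?_⟩
    calc |normg S₀ S₁ q h x₁ - normg S₀ S₁ q h x₂|
        ≤ K⁻¹ * (K * ε / 2) := hbound h hh hh₀ hI x₁ hx₁ x₂ hx₂ _
          fun y hy => (hqδ x₁ hx₁ x₂ hx₂ hx y hy).le
      _ < ε := by field_simp; linarith
end
end

section
/- Let μ₀ and μ₁ be absolutely continuous probability measures on the Borel σ-field of ℝⁿ, and let q : ℝⁿ × ℝⁿ → ℝ be an everywhere continuous, strictly positive function. Suppose (π, ν) and (π', ν') are two pairs of measures on the Borel σ-field of ℝⁿ × ℝⁿ, each satisfying: (1) π is a probability measure and ν is a σ-finite product measure (ν = ν₀ × ν₁ with ν₀, ν₁ σ-finite Borel measures on ℝⁿ), and likewise for (π', ν'); (2) π(E × ℝⁿ) = μ₀(E) and π(ℝⁿ × E) = μ₁(E) for every Borel E ⊆ ℝⁿ, and likewise for π'; (3) dπ/dν = q and dπ'/dν' = q. Then π = π' and ν = ν'. -/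
open MeasureTheory

noncomputable section

/-- The three defining properties of the pair `(π, ν)` in Jamison's theorem on
`ℝⁿ`: `π` is a probability measure, `ν` is a σ-finite product measure, `π` has
marginals `μ₀, μ₁`, and `dπ/dν = q`. -/
def JamisonPair {n : ℕ} (μ₀ μ₁ : Measure (EuclideanSpace ℝ (Fin n)))
    (q : EuclideanSpace ℝ (Fin n) → EuclideanSpace ℝ (Fin n) → ℝ)
    (π ν : Measure (EuclideanSpace ℝ (Fin n) × EuclideanSpace ℝ (Fin n))) : Prop :=
  IsProbabilityMeasure π ∧
  (∃ ν₀ ν₁ : Measure (EuclideanSpace ℝ (Fin n)),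
    SigmaFinite ν₀ ∧ SigmaFinite ν₁ ∧ ν = ν₀.prod ν₁) ∧
  (∀ E : Set (EuclideanSpace ℝ (Fin n)), MeasurableSet E →
    π (E ×ˢ (Set.univ : Set (EuclideanSpace ℝ (Fin n)))) = μ₀ E) ∧
  (∀ E : Set (EuclideanSpace ℝ (Fin n)), MeasurableSet E →
    π ((Set.univ : Set (EuclideanSpace ℝ (Fin n))) ×ˢ E) = μ₁ E) ∧
  π = ν.withDensity (fun p => ENNReal.ofReal (q p.1 p.2))

/-!
Each marginal of `π = Q · (ν₀ ⊗ ν₁)` with `Q > 0` is equivalent to the corresponding factor, so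
two such pairs with the same marginals have equivalent factors. Hence
`ν₀' ⊗ ν₁' = e^{u(x) + v(y)} · (ν₀ ⊗ ν₁)` with `u = log dν₀'/dν₀`, `v = log dν₁'/dν₁`, and
`π' = e^{u + v} · π`. Testing the equality of the marginals of `π` and `π'` against the bounded
function `arctan u(x) + arctan v(y)` gives `∫ (e^{u + v} - 1) (arctan u + arctan v) dπ = 0`.
As `arctan` is odd and increasing, the integrand is positive where `u + v ≠ 0`, so `u + v = 0`
holds `π`-a.e., hence `(ν₀ ⊗ ν₁)`-a.e.
-/

open Set
open scoped ENNReal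

namespace Real

theorem exp_sub_one_mul_arctan_add_arctan_pos {u v : ℝ} (h : u + v ≠ 0) :
    0 < (exp (u + v) - 1) * (arctan u + arctan v) := by
  rw [← sub_neg_eq_add (arctan u), ← arctan_neg]
  rcases h.lt_or_gt with h | h
  · exact mul_pos_of_neg_of_neg (by linarith [exp_lt_one_iff.2 h])
      (sub_neg.2 (arctan_strictMono (by linarith)))
  · exact mul_pos (by linarith [one_lt_exp_iff.2 h]) (sub_pos.2 (arctan_strictMono (by linarith)))

end Real

theorem integrable_arctan_comp {Z : Type*} [MeasurableSpace Z] {μ : Measure Z} [IsFiniteMeasure μ]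
    {w : Z → ℝ} (hw : Measurable w) : Integrable (fun z => Real.arctan (w z)) μ :=
  Integrable.of_bound (Real.measurable_arctan.comp hw).aestronglyMeasurable (Real.pi / 2)
    (ae_of_all _ fun _ => abs_le.2
      ⟨(Real.neg_pi_div_two_lt_arctan _).le, (Real.arctan_lt_pi_div_two _).le⟩)

theorem ae_rnDeriv_ne_zero_and_ne_top {Z : Type*} [MeasurableSpace Z] {μ ν : Measure Z}
    [SigmaFinite μ] [SigmaFinite ν] (hνμ : ν ≪ μ) :
    ∀ᵐ x ∂ν, μ.rnDeriv ν x ≠ 0 ∧ μ.rnDeriv ν x ≠ ∞ := by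
  filter_upwards [Measure.rnDeriv_pos' hνμ, Measure.rnDeriv_ne_top μ ν] with x hpos htop
  exact ⟨hpos.ne', htop⟩

section

variable {X Y : Type*} [MeasurableSpace X] [MeasurableSpace Y]

theorem map_fst_eq_of_forall_prod_univ {ρ : Measure (X × Y)} {μ : Measure X}
    (h : ∀ E, MeasurableSet E → ρ (E ×ˢ univ) = μ E) : ρ.map Prod.fst = μ :=
  Measure.ext fun E hE => by rw [Measure.map_apply measurable_fst hE, ← prod_univ, h E hE]

theorem map_snd_eq_of_forall_univ_prod {ρ : Measure (X × Y)} {μ : Measure Y}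
    (h : ∀ E, MeasurableSet E → ρ (univ ×ˢ E) = μ E) : ρ.map Prod.snd = μ :=
  Measure.ext fun E hE => by rw [Measure.map_apply measurable_snd hE, ← univ_prod, h E hE]

theorem integral_comp_fst_add_comp_snd_congr {ρ π : Measure (X × Y)} {f : X → ℝ} {g : Y → ℝ}
    (hfst : ρ.map Prod.fst = π.map Prod.fst) (hsnd : ρ.map Prod.snd = π.map Prod.snd)
    (hf : Integrable f (π.map Prod.fst)) (hg : Integrable g (π.map Prod.snd)) :
    ∫ p, f p.1 + g p.2 ∂ρ = ∫ p, f p.1 + g p.2 ∂π := by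
  have key : ∀ μ : Measure (X × Y), μ.map Prod.fst = π.map Prod.fst →
      μ.map Prod.snd = π.map Prod.snd →
      ∫ p, f p.1 + g p.2 ∂μ = ∫ x, f x ∂(π.map Prod.fst) + ∫ y, g y ∂(π.map Prod.snd) := by
    intro μ h₁ h₂
    rw [← h₁] at hf ⊢
    rw [← h₂] at hg ⊢
    have hf' : Integrable (fun p : X × Y => f p.1) μ := hf.comp_measurable measurable_fst
    have hg' : Integrable (fun p : X × Y => g p.2) μ := hg.comp_measurable measurable_snd
    rw [integral_add hf' hg', integral_map measurable_fst.aemeasurable hf.1,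
      integral_map measurable_snd.aemeasurable hg.1]
  rw [key ρ hfst hsnd, key π rfl rfl]

theorem prod_eq_withDensity_rnDeriv_mul_rnDeriv {ν₀ ν₀' : Measure X} {ν₁ ν₁' : Measure Y}
    [SigmaFinite ν₀] [SigmaFinite ν₀'] [SigmaFinite ν₁] [SigmaFinite ν₁']
    (h₀ : ν₀' ≪ ν₀) (h₁ : ν₁' ≪ ν₁) :
    ν₀'.prod ν₁' = (ν₀.prod ν₁).withDensity fun p => ν₀'.rnDeriv ν₀ p.1 * ν₁'.rnDeriv ν₁ p.2 := by
  rw [← prod_withDensity (Measure.measurable_rnDeriv _ _) (Measure.measurable_rnDeriv _ _),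
    Measure.withDensity_rnDeriv_eq _ _ h₀, Measure.withDensity_rnDeriv_eq _ _ h₁]

theorem ne_zero_and_ne_zero_of_withDensity_prod_ne_zero {ν₀ : Measure X} {ν₁ : Measure Y}
    {Q : X × Y → ℝ≥0∞} (h : (ν₀.prod ν₁).withDensity Q ≠ 0) : ν₀ ≠ 0 ∧ ν₁ ≠ 0 := by
  constructor <;> rintro rfl <;> exact h (by simp)

theorem absolutelyContinuous_of_map_fst_withDensity_prod_eq {ν₀ ν₀' : Measure X}
    {ν₁ ν₁' : Measure Y} [SFinite ν₁] [SFinite ν₁'] {Q : X × Y → ℝ≥0∞} (hQ : Measurable Q)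
    (hQ0 : ∀ p, Q p ≠ 0) (hπ' : (ν₀'.prod ν₁').withDensity Q ≠ 0)
    (h : ((ν₀'.prod ν₁').withDensity Q).map Prod.fst = ((ν₀.prod ν₁).withDensity Q).map Prod.fst) :
    ν₀' ≪ ν₀ := by
  have hν₁' := (ne_zero_and_ne_zero_of_withDensity_prod_ne_zero hπ').2
  refine (Measure.absolutelyContinuous_smul (mt Measure.measure_univ_eq_zero.1 hν₁')).trans ?_
  rw [← Measure.map_fst_prod]
  refine ((withDensity_absolutelyContinuous' hQ.aemeasurable (ae_of_all _ hQ0)).map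
    measurable_fst).trans ?_
  rw [h]
  refine ((withDensity_absolutelyContinuous _ Q).map measurable_fst).trans ?_
  rw [Measure.map_fst_prod]
  exact Measure.smul_absolutelyContinuous

theorem absolutelyContinuous_of_map_snd_withDensity_prod_eq {ν₀ ν₀' : Measure X}
    {ν₁ ν₁' : Measure Y} [SFinite ν₁] [SFinite ν₁'] {Q : X × Y → ℝ≥0∞} (hQ : Measurable Q)
    (hQ0 : ∀ p, Q p ≠ 0) (hπ' : (ν₀'.prod ν₁').withDensity Q ≠ 0)
    (h : ((ν₀'.prod ν₁').withDensity Q).map Prod.snd = ((ν₀.prod ν₁).withDensity Q).map Prod.snd) :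
    ν₁' ≪ ν₁ := by
  have hν₀' := (ne_zero_and_ne_zero_of_withDensity_prod_ne_zero hπ').1
  refine (Measure.absolutelyContinuous_smul (mt Measure.measure_univ_eq_zero.1 hν₀')).trans ?_
  rw [← Measure.map_snd_prod]
  refine ((withDensity_absolutelyContinuous' hQ.aemeasurable (ae_of_all _ hQ0)).map
    measurable_snd).trans ?_
  rw [h]
  refine ((withDensity_absolutelyContinuous _ Q).map measurable_snd).trans ?_
  rw [Measure.map_snd_prod]
  exact Measure.smul_absolutelyContinuous

theorem ae_add_eq_zero_of_map_withDensity_exp_eq {π : Measure (X × Y)} [IsFiniteMeasure π]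
    {u : X → ℝ} {v : Y → ℝ} (hu : Measurable u) (hv : Measurable v)
    (hfst : (π.withDensity fun p => ENNReal.ofReal (Real.exp (u p.1 + v p.2))).map Prod.fst =
      π.map Prod.fst)
    (hsnd : (π.withDensity fun p => ENNReal.ofReal (Real.exp (u p.1 + v p.2))).map Prod.snd =
      π.map Prod.snd) :
    ∀ᵐ p ∂π, u p.1 + v p.2 = 0 := by
  set D : X × Y → ℝ≥0∞ := fun p => ENNReal.ofReal (Real.exp (u p.1 + v p.2))
  set G : X × Y → ℝ := fun p => Real.arctan (u p.1) + Real.arctan (v p.2)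
  have hD : Measurable D := by fun_prop
  have hD_lt_top : ∀ᵐ p ∂π, D p < ∞ := ae_of_all _ fun _ => ENNReal.ofReal_lt_top
  have : IsFiniteMeasure (π.withDensity D) := by
    rw [← Measure.isFiniteMeasure_map_iff measurable_fst.aemeasurable, hfst]
    infer_instance
  have hG (μ : Measure (X × Y)) [IsFiniteMeasure μ] : Integrable G μ :=
    (integrable_arctan_comp (hu.comp measurable_fst)).add
      (integrable_arctan_comp (hv.comp measurable_snd))
  have hGD := hG (π.withDensity D)
  have hint : ∫ p, G p ∂(π.withDensity D) = ∫ p, G p ∂π :=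
    integral_comp_fst_add_comp_snd_congr hfst hsnd (integrable_arctan_comp hu)
      (integrable_arctan_comp hv)
  rw [integral_withDensity_eq_integral_toReal_smul hD hD_lt_top] at hint
  rw [integrable_withDensity_iff_integrable_smul' hD hD_lt_top] at hGD
  simp only [D, ENNReal.toReal_ofReal (Real.exp_pos _).le, smul_eq_mul] at hint hGD
  have hF : ∫ p, (Real.exp (u p.1 + v p.2) - 1) * G p ∂π = 0 := by
    simp_rw [sub_one_mul]
    rw [integral_sub hGD (hG π), hint, sub_self]
  have hF_nonneg : ∀ p, 0 ≤ (Real.exp (u p.1 + v p.2) - 1) * G p := fun p => by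
    rcases eq_or_ne (u p.1 + v p.2) 0 with h | h
    · simp [h]
    · exact (Real.exp_sub_one_mul_arctan_add_arctan_pos h).le
  have hF_int : Integrable (fun p => (Real.exp (u p.1 + v p.2) - 1) * G p) π :=
    (hGD.sub (hG π)).congr (ae_of_all _ fun _ => (sub_one_mul _ _).symm)
  filter_upwards [(integral_eq_zero_iff_of_nonneg_ae (ae_of_all _ hF_nonneg) hF_int).1 hF]
    with p hp
  by_contra h
  exact (Real.exp_sub_one_mul_arctan_add_arctan_pos h).ne' hp

theorem ae_eq_one_of_map_withDensity_eq {π : Measure (X × Y)} [IsFiniteMeasure π]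
    {A : X → ℝ≥0∞} {B : Y → ℝ≥0∞} (hA : Measurable A) (hB : Measurable B)
    (hA' : ∀ᵐ p ∂π, A p.1 ≠ 0 ∧ A p.1 ≠ ∞) (hB' : ∀ᵐ p ∂π, B p.2 ≠ 0 ∧ B p.2 ≠ ∞)
    (hfst : (π.withDensity fun p => A p.1 * B p.2).map Prod.fst = π.map Prod.fst)
    (hsnd : (π.withDensity fun p => A p.1 * B p.2).map Prod.snd = π.map Prod.snd) :
    (fun p => A p.1 * B p.2) =ᵐ[π] 1 := by
  set u : X → ℝ := fun x => Real.log (A x).toReal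
  set v : Y → ℝ := fun y => Real.log (B y).toReal
  have hexp : (fun p => A p.1 * B p.2) =ᵐ[π]
      fun p => ENNReal.ofReal (Real.exp (u p.1 + v p.2)) := by
    filter_upwards [hA', hB'] with p ⟨hA0, hAtop⟩ ⟨hB0, hBtop⟩
    rw [Real.exp_add, ENNReal.ofReal_mul (Real.exp_pos _).le,
      Real.exp_log (ENNReal.toReal_pos hA0 hAtop), Real.exp_log (ENNReal.toReal_pos hB0 hBtop),
      ENNReal.ofReal_toReal hAtop, ENNReal.ofReal_toReal hBtop]
  rw [withDensity_congr_ae hexp] at hfst hsnd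
  filter_upwards [hexp, ae_add_eq_zero_of_map_withDensity_exp_eq (by fun_prop) (by fun_prop)
    hfst hsnd] with p hp huv
  rw [hp, huv, Real.exp_zero, ENNReal.ofReal_one, Pi.one_apply]

theorem prod_eq_of_map_withDensity_prod_eq {ν₀ ν₀' : Measure X} {ν₁ ν₁' : Measure Y}
    [SigmaFinite ν₀] [SigmaFinite ν₀'] [SigmaFinite ν₁] [SigmaFinite ν₁']
    {Q : X × Y → ℝ≥0∞} (hQ : Measurable Q) (hQ0 : ∀ p, Q p ≠ 0)
    {π π' : Measure (X × Y)} [IsFiniteMeasure π] [NeZero π]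
    (hπ : π = (ν₀.prod ν₁).withDensity Q) (hπ' : π' = (ν₀'.prod ν₁').withDensity Q)
    (hfst : π'.map Prod.fst = π.map Prod.fst) (hsnd : π'.map Prod.snd = π.map Prod.snd) :
    ν₀'.prod ν₁' = ν₀.prod ν₁ := by
  have hπ0 : π ≠ 0 := NeZero.ne π
  have hπ'0 : π' ≠ 0 := fun h => hπ0 <| by
    rw [← Measure.map_eq_zero_iff measurable_fst.aemeasurable, ← hfst, h, Measure.map_zero]
  subst hπ hπ'
  have hac₀ := absolutelyContinuous_of_map_fst_withDensity_prod_eq hQ hQ0 hπ'0 hfst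
  have hac₀' := absolutelyContinuous_of_map_fst_withDensity_prod_eq hQ hQ0 hπ0 hfst.symm
  have hac₁ := absolutelyContinuous_of_map_snd_withDensity_prod_eq hQ hQ0 hπ'0 hsnd
  have hac₁' := absolutelyContinuous_of_map_snd_withDensity_prod_eq hQ hQ0 hπ0 hsnd.symm
  have hprod := prod_eq_withDensity_rnDeriv_mul_rnDeriv hac₀ hac₁
  have hK : Measurable fun p : X × Y => ν₀'.rnDeriv ν₀ p.1 * ν₁'.rnDeriv ν₁ p.2 := by fun_prop
  have hπ'π : (ν₀'.prod ν₁').withDensity Q = ((ν₀.prod ν₁).withDensity Q).withDensity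
      fun p => ν₀'.rnDeriv ν₀ p.1 * ν₁'.rnDeriv ν₁ p.2 := by
    rw [hprod, ← withDensity_mul _ hK hQ, ← withDensity_mul _ hQ hK, mul_comm]
  have hνπ := withDensity_absolutelyContinuous' hQ.aemeasurable (ae_of_all (ν₀.prod ν₁) hQ0)
  have hπν := withDensity_absolutelyContinuous (ν₀.prod ν₁) Q
  have hone := ae_eq_one_of_map_withDensity_eq
    (Measure.measurable_rnDeriv _ _) (Measure.measurable_rnDeriv _ _)
    (hπν.ae_le <| Measure.quasiMeasurePreserving_fst.ae <|
      ae_rnDeriv_ne_zero_and_ne_top hac₀')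
    (hπν.ae_le <| Measure.quasiMeasurePreserving_snd.ae <|
      ae_rnDeriv_ne_zero_and_ne_top hac₁')
    (hπ'π ▸ hfst) (hπ'π ▸ hsnd)
  rw [hprod, withDensity_congr_ae (hνπ.ae_le hone), withDensity_one]

end

theorem jamison_unique_general (n : ℕ)
    (μ₀ μ₁ : Measure (EuclideanSpace ℝ (Fin n)))
    (q : EuclideanSpace ℝ (Fin n) → EuclideanSpace ℝ (Fin n) → ℝ)
    (hqc : Continuous (fun p : EuclideanSpace ℝ (Fin n) × EuclideanSpace ℝ (Fin n) =>
      q p.1 p.2))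
    (hqpos : ∀ x y, 0 < q x y)
    (π ν π' ν' : Measure (EuclideanSpace ℝ (Fin n) × EuclideanSpace ℝ (Fin n)))
    (h : JamisonPair μ₀ μ₁ q π ν) (h' : JamisonPair μ₀ μ₁ q π' ν') :
    π = π' ∧ ν = ν' := by
  obtain ⟨hπ, ⟨ν₀, ν₁, _, _, rfl⟩, hπ₀, hπ₁, hπν⟩ := h
  obtain ⟨-, ⟨ν₀', ν₁', _, _, rfl⟩, hπ₀', hπ₁', hπν'⟩ := h'
  have hν : ν₀'.prod ν₁' = ν₀.prod ν₁ :=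
    prod_eq_of_map_withDensity_prod_eq (by fun_prop)
      (fun p => (ENNReal.ofReal_pos.2 (hqpos p.1 p.2)).ne') hπν hπν'
      (by rw [map_fst_eq_of_forall_prod_univ hπ₀, map_fst_eq_of_forall_prod_univ hπ₀'])
      (by rw [map_snd_eq_of_forall_univ_prod hπ₁, map_snd_eq_of_forall_univ_prod hπ₁'])
  exact ⟨by rw [hπν, hπν', hν], hν.symm⟩

/-- uniqueness of the pair `(π, ν)` with `dπ/dν = q` and
prescribed absolutely continuous marginals on `ℝⁿ` (Jamison's theorem,
uniqueness part). -/
theorem jamison_unique (n : ℕ)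
    (μ₀ μ₁ : Measure (EuclideanSpace ℝ (Fin n)))
    (hp₀ : IsProbabilityMeasure μ₀) (hp₁ : IsProbabilityMeasure μ₁)
    (hac₀ : μ₀ ≪ volume) (hac₁ : μ₁ ≪ volume)
    (q : EuclideanSpace ℝ (Fin n) → EuclideanSpace ℝ (Fin n) → ℝ)
    (hqc : Continuous (fun p : EuclideanSpace ℝ (Fin n) × EuclideanSpace ℝ (Fin n) =>
      q p.1 p.2))
    (hqpos : ∀ x y, 0 < q x y)
    (π ν π' ν' : Measure (EuclideanSpace ℝ (Fin n) × EuclideanSpace ℝ (Fin n)))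
    (h : JamisonPair μ₀ μ₁ q π ν) (h' : JamisonPair μ₀ μ₁ q π' ν') :
    π = π' ∧ ν = ν' :=
  jamison_unique_general n μ₀ μ₁ q hqc hqpos π ν π' ν' h h'
end
end
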